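/- arXiv:1907.07658 — 5 statements merged into one kernel-verified Lean document; each statement's English description precedes it below -/
import Mathlib

section
/- Let G be connected with sdiam_k(G) > p·srad_k(G) for some p > 1. Let D = {v_1,...,v_k} satisfy d(D) = sdiam_k(G), let v_0 satisfy e_k(v_0) = srad_k(G), let T_1 be a Steiner tree for D_1 = (D \ {v_1}) ∪ {v_0}. Then for every i with 2 ≤ i ≤ k, the distance in T_1 between v_i and v_0 satisfies d_{T_1}(v_i, v_0) > ((p−1)/p)·sdiam_k(G). -/
/-- The Steiner distance of a vertex set `S` in `G`: the minimum number of edges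
of a connected subgraph of `G` containing all vertices of `S`. -/
noncomputable def steinerDist {V : Type*} [Fintype V] (G : SimpleGraph V) (S : Set V) : ℕ :=
  sInf {n | ∃ H : G.Subgraph, H.Connected ∧ S ⊆ H.verts ∧ H.edgeSet.ncard = n}

/-- The Steiner `k`-eccentricity of a vertex `v`:
the maximum Steiner distance of a `k`-set containing `v`. -/
noncomputable def steinerEcc {V : Type*} [Fintype V] (G : SimpleGraph V) (k : ℕ) (v : V) : ℕ :=
  sSup {n | ∃ S : Finset V, v ∈ S ∧ S.card = k ∧ steinerDist G (S : Set V) = n}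

/-- The Steiner `k`-radius of `G`. -/
noncomputable def srad {V : Type*} [Fintype V] (G : SimpleGraph V) (k : ℕ) : ℕ :=
  sInf (Set.range (steinerEcc G k))

/-- The Steiner `k`-diameter of `G`. -/
noncomputable def sdiam {V : Type*} [Fintype V] (G : SimpleGraph V) (k : ℕ) : ℕ :=
  sSup (Set.range (steinerEcc G k))

/-- `H` is a Steiner tree for `S` in `G`: a connected acyclic subgraph containing `S`
whose number of edges equals the Steiner distance of `S`. -/
def IsSteinerTree {V : Type*} [Fintype V] (G : SimpleGraph V) (S : Set V) (H : G.Subgraph) :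
    Prop :=
  H.Connected ∧ S ⊆ H.verts ∧ H.coe.IsAcyclic ∧ H.edgeSet.ncard = steinerDist G S

/-- The set of leaves (vertices of degree 1) of a subgraph. -/
noncomputable def subLeaves {V : Type*} [Fintype V] {G : SimpleGraph V} (H : G.Subgraph) :
    Set V :=
  {v | v ∈ H.verts ∧ (H.neighborSet v).ncard = 1}

open SimpleGraph in
lemma steinerSet_nonempty {V : Type*} [Fintype V] (G : SimpleGraph V) (hG : G.Connected)
    (S : Set V) :
    {n | ∃ H : G.Subgraph, H.Connected ∧ S ⊆ H.verts ∧ H.edgeSet.ncard = n}.Nonempty := by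
  refine ⟨_, ⊤, ?_, ?_, rfl⟩
  · rw [Subgraph.connected_iff', (Subgraph.topIso (G := G)).connected_iff]
    exact hG
  · simp [Subgraph.verts_top]

open SimpleGraph in
lemma steinerDist_exists {V : Type*} [Fintype V] (G : SimpleGraph V) (hG : G.Connected)
    (S : Set V) :
    ∃ H : G.Subgraph, H.Connected ∧ S ⊆ H.verts ∧ H.edgeSet.ncard = steinerDist G S :=
  Nat.sInf_mem (steinerSet_nonempty G hG S)

lemma steinerDist_mono {V : Type*} [Fintype V] (G : SimpleGraph V) (hG : G.Connected)
    {A B : Set V} (hAB : A ⊆ B) : steinerDist G A ≤ steinerDist G B := by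
  obtain ⟨H, hc, hs, he⟩ := steinerDist_exists G hG B
  exact Nat.sInf_le ⟨H, hc, hAB.trans hs, he⟩

lemma steinerDist_le_ecc {V : Type*} [Fintype V] (G : SimpleGraph V) (hG : G.Connected)
    (k : ℕ) (v : V) (S : Finset V) (hv : v ∈ S) (hcard : S.card = k) :
    steinerDist G (S : Set V) ≤ steinerEcc G k v := by
  apply le_csSup
  · refine ⟨G.edgeSet.ncard, ?_⟩
    rintro n ⟨T, -, -, rfl⟩
    have : G.edgeSet.ncard ∈
        {n | ∃ H : G.Subgraph, H.Connected ∧ (T : Set V) ⊆ H.verts ∧ H.edgeSet.ncard = n} := by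
      refine ⟨⊤, ?_, by simp, by rw [SimpleGraph.Subgraph.edgeSet_top]⟩
      rw [SimpleGraph.Subgraph.connected_iff',
        (SimpleGraph.Subgraph.topIso (G := G)).connected_iff]
      exact hG
    exact Nat.sInf_le this
  · exact ⟨S, hv, hcard, rfl⟩

theorem dist_to_center_lb {V : Type*} [Fintype V] (G : SimpleGraph V) (hG : G.Connected)
    (k : ℕ) (hk : 2 ≤ k) (hcard : k ≤ Fintype.card V)
    (p : ℝ) (hp : 1 < p) (hps : (sdiam G k : ℝ) > p * srad G k)
    (vs : Fin k → V) (hinj : Function.Injective vs)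
    (hD : steinerDist G (Set.range vs) = sdiam G k)
    (v₀ : V) (hv₀ : steinerEcc G k v₀ = srad G k)
    (i₁ : Fin k) (hi₁ : (i₁ : ℕ) = 0)
    (T1 : G.Subgraph) (hT1 : IsSteinerTree G ((Set.range vs \ {vs i₁}) ∪ {v₀}) T1)
    (i : Fin k) (hi : i ≠ i₁) :
    (T1.spanningCoe.dist (vs i) v₀ : ℝ) > (p - 1) / p * sdiam G k := by
  classical
  obtain ⟨hT1c, hT1v, -, hT1e⟩ := hT1
  have hvi : vs i ∈ T1.verts := hT1v (Or.inl ⟨⟨i, rfl⟩, fun h => hi (hinj h)⟩)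
  have hv0 : v₀ ∈ T1.verts := hT1v (Or.inr rfl)
  -- a walk in `T1.spanningCoe` of length `dist`
  have hreach : T1.spanningCoe.Reachable (vs i) v₀ :=
    (hT1c.coe ⟨vs i, hvi⟩ ⟨v₀, hv0⟩).map ⟨Subtype.val, fun h => h⟩
  obtain ⟨w, hw⟩ := hreach.exists_walk_length_eq_dist
  set L : ℕ := T1.spanningCoe.dist (vs i) v₀ with hL
  set w' : G.Walk (vs i) v₀ := w.mapLe T1.spanningCoe_le with hw'def
  have hw'len : w'.length = L := by
    rw [hw'def]; simpa [SimpleGraph.Walk.length_map] using hw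
  -- the path subgraph
  set P : G.Subgraph := w'.toSubgraph with hP
  have hPedge : P.edgeSet.ncard ≤ L := by
    have h1 : P.edgeSet = ↑w'.edges.toFinset := by
      rw [hP, SimpleGraph.Walk.edgeSet_toSubgraph]
      ext e; simp
    rw [h1, Set.ncard_coe_finset]
    calc w'.edges.toFinset.card ≤ w'.edges.length := w'.edges.toFinset_card_le
      _ = L := by rw [SimpleGraph.Walk.length_edges, hw'len]
  -- a minimum connected subgraph for `D_i`
  obtain ⟨Hi, hHic, hHiv, hHie⟩ :=
    steinerDist_exists G hG ((Set.range vs \ {vs i}) ∪ {v₀})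
  have hv0Hi : v₀ ∈ Hi.verts := hHiv (Or.inr rfl)
  -- the union subgraph
  have hsupc : (Hi ⊔ P).Connected := by
    refine SimpleGraph.Subgraph.connected_sup hHic.preconnected w'.toSubgraph_connected.preconnected ⟨v₀, ?_⟩
    rw [SimpleGraph.Subgraph.verts_inf]
    exact ⟨hv0Hi, w'.end_mem_verts_toSubgraph⟩
  have hsupv : Set.range vs ⊆ (Hi ⊔ P).verts := by
    rintro x ⟨j, rfl⟩
    rw [SimpleGraph.Subgraph.verts_sup]
    by_cases hji : j = i
    · subst hji
      exact Or.inr w'.start_mem_verts_toSubgraph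
    · exact Or.inl (hHiv (Or.inl ⟨⟨j, rfl⟩, fun h => hji (hinj h)⟩))
  -- key inequality: sdiam ≤ steinerDist D_i + L
  have hkey : sdiam G k ≤ steinerDist G ((Set.range vs \ {vs i}) ∪ {v₀}) + L := by
    rw [← hD]
    refine le_trans (Nat.sInf_le ⟨Hi ⊔ P, hsupc, hsupv, rfl⟩) ?_
    calc (Hi ⊔ P).edgeSet.ncard ≤ Hi.edgeSet.ncard + P.edgeSet.ncard := by
          rw [SimpleGraph.Subgraph.edgeSet_sup]
          exact Set.ncard_union_le _ _
      _ ≤ _ := by rw [hHie]; exact Nat.add_le_add_left hPedge _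
  -- steinerDist D_i ≤ srad
  have hDile : steinerDist G ((Set.range vs \ {vs i}) ∪ {v₀}) ≤ srad G k := by
    set Fi : Finset V := insert v₀ ((Finset.univ.image vs).erase (vs i)) with hFi
    have hFicard : Fi.card ≤ k := by
      have himg : (Finset.univ.image vs).card = k := by
        rw [Finset.card_image_of_injective _ hinj, Finset.card_univ, Fintype.card_fin]
      have herase : ((Finset.univ.image vs).erase (vs i)).card = k - 1 := by
        rw [Finset.card_erase_of_mem (Finset.mem_image.mpr ⟨i, Finset.mem_univ i, rfl⟩), himg]
      calc Fi.card ≤ ((Finset.univ.image vs).erase (vs i)).card + 1 :=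
            Finset.card_insert_le _ _
        _ ≤ k := by omega
    obtain ⟨S, hFiS, hScard⟩ := Finset.exists_superset_card_eq hFicard hcard
    have hsub : (Set.range vs \ {vs i}) ∪ {v₀} ⊆ (S : Set V) := by
      rintro x (⟨⟨j, rfl⟩, hx⟩ | rfl)
      · refine hFiS ?_
        rw [hFi]
        exact Finset.mem_insert_of_mem (Finset.mem_erase.mpr
          ⟨hx, Finset.mem_image.mpr ⟨j, Finset.mem_univ j, rfl⟩⟩)
      · exact hFiS (Finset.mem_insert_self _ _)
    calc steinerDist G ((Set.range vs \ {vs i}) ∪ {v₀}) ≤ steinerDist G (S : Set V) :=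
          steinerDist_mono G hG hsub
      _ ≤ steinerEcc G k v₀ :=
          steinerDist_le_ecc G hG k v₀ S (hFiS (Finset.mem_insert_self _ _)) hScard
      _ = srad G k := hv₀
  -- final arithmetic
  have hd : (sdiam G k : ℝ) ≤ (srad G k : ℝ) + L := by
    have h := hkey.trans (Nat.add_le_add_right hDile L)
    exact_mod_cast h
  have hp0 : (0:ℝ) < p := by linarith
  rw [gt_iff_lt, div_mul_eq_mul_div, div_lt_iff₀ hp0]
  nlinarith [hd, hps, hp0]
end

section
/- Let G be connected with sdiam_k(G) > p·srad_k(G) for some p > 1, let D = {v_1,...,v_k} realize the Steiner k-diameter, v_0 realize the Steiner k-radius, T_1 a Steiner tree of D_1 = (D\{v_1}) ∪ {v_0}, and for each i let T_i be a Steiner tree of D_i = (D\{v_i}) ∪ {v_0}, T_i' the minimal subtree of T_i containing D_i \ {v_0}, and ℓ_i = ||T_i|| − ||T_i'||; assume ℓ_1 ≤ ℓ_j for all j. Then for all distinct i, j with 2 ≤ i, j ≤ k, d_{T_1}(v_i, v_j) > ((p−1)/p)·sdiam_k(G) + ℓ_1. -/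
section AuxHelpers
variable {V : Type*} [Fintype V] {G : SimpleGraph V}

lemma aux_top_connected (hG : G.Connected) : (⊤ : G.Subgraph).Connected := by
  rw [SimpleGraph.Subgraph.connected_iff']
  exact (SimpleGraph.Iso.connected_iff SimpleGraph.Subgraph.topIso).mpr hG

lemma aux_steinerDist_le {H : G.Subgraph} {S : Set V} (hH : H.Connected) (hS : S ⊆ H.verts) :
    steinerDist G S ≤ H.edgeSet.ncard :=
  Nat.sInf_le ⟨H, hH, hS, rfl⟩

lemma aux_set_nonempty (hG : G.Connected) (S : Set V) :
    {n | ∃ H : G.Subgraph, H.Connected ∧ S ⊆ H.verts ∧ H.edgeSet.ncard = n}.Nonempty :=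
  ⟨_, ⊤, aux_top_connected hG, by simp, rfl⟩

lemma aux_steinerDist_mono (hG : G.Connected) {S S' : Set V} (h : S ⊆ S') :
    steinerDist G S ≤ steinerDist G S' := by
  obtain ⟨H, hH, hS', hn⟩ := Nat.sInf_mem (aux_set_nonempty hG S')
  exact le_trans (aux_steinerDist_le hH (h.trans hS')) (le_of_eq hn)

lemma aux_steinerDist_le_ecc (hG : G.Connected) {k : ℕ} (v : V) (S : Finset V)
    (hv : v ∈ S) (hcard : S.card = k) : steinerDist G (S : Set V) ≤ steinerEcc G k v := by
  have hbdd : BddAbove {n | ∃ S : Finset V, v ∈ S ∧ S.card = k ∧ steinerDist G (S : Set V) = n} := by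
    refine ⟨(⊤ : G.Subgraph).edgeSet.ncard, ?_⟩
    rintro n ⟨S, -, -, rfl⟩
    exact aux_steinerDist_le (aux_top_connected hG) (by simp)
  exact le_csSup hbdd ⟨S, hv, hcard, rfl⟩

lemma aux_Di_le_srad (hG : G.Connected) {k : ℕ} (hk1 : 1 ≤ k) (hcard : k ≤ Fintype.card V)
    (vs : Fin k → V) (hinj : Function.Injective vs) (v₀ : V) (x : V) (hx : x ∈ Set.range vs) :
    steinerDist G ((Set.range vs \ {x}) ∪ {v₀}) ≤ steinerEcc G k v₀ := by
  classical
  set A : Finset V := ((Finset.univ.image vs).erase x) ∪ {v₀} with hA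
  have himg : (Finset.univ.image vs).card = k := by
    rw [Finset.card_image_of_injective _ hinj, Finset.card_univ, Fintype.card_fin]
  have hxmem : x ∈ Finset.univ.image vs := by
    obtain ⟨m, rfl⟩ := hx; simp
  have herase : ((Finset.univ.image vs).erase x).card = k - 1 := by
    rw [Finset.card_erase_of_mem hxmem, himg]
  have hAcard : A.card ≤ k := by
    have h2 := Finset.card_union_le ((Finset.univ.image vs).erase x) ({v₀} : Finset V)
    rw [herase, Finset.card_singleton] at h2
    rw [hA]
    omega
  obtain ⟨S, hAS, -, hScard⟩ :=
    Finset.exists_subsuperset_card_eq A.subset_univ hAcard (by rwa [Finset.card_univ])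
  have hsub : (Set.range vs \ {x}) ∪ {v₀} ⊆ (S : Set V) := by
    intro y hy
    apply hAS
    rcases hy with ⟨⟨m, rfl⟩, hne⟩ | hy
    · exact Finset.mem_union_left _ (Finset.mem_erase.mpr ⟨hne, by simp⟩)
    · exact Finset.mem_union_right _ (by simpa using hy)
  calc steinerDist G ((Set.range vs \ {x}) ∪ {v₀}) ≤ steinerDist G (S : Set V) :=
        aux_steinerDist_mono hG hsub
    _ ≤ steinerEcc G k v₀ := aux_steinerDist_le_ecc hG v₀ S (hAS (by simp [hA])) hScard

end AuxHelpers

theorem dist_between_diametral_lb {V : Type*} [Fintype V] (G : SimpleGraph V)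
    (hG : G.Connected) (k : ℕ) (hk : 2 ≤ k) (hcard : k ≤ Fintype.card V)
    (p : ℝ) (hp : 1 < p) (hps : (sdiam G k : ℝ) > p * srad G k)
    (vs : Fin k → V) (hinj : Function.Injective vs)
    (hD : steinerDist G (Set.range vs) = sdiam G k)
    (v₀ : V) (hv₀ : steinerEcc G k v₀ = srad G k)
    (i₁ : Fin k) (hi₁ : (i₁ : ℕ) = 0)
    (T : Fin k → G.Subgraph)
    (hT : ∀ i, IsSteinerTree G ((Set.range vs \ {vs i}) ∪ {v₀}) (T i))
    (T' : Fin k → G.Subgraph)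
    (hT'le : ∀ i, T' i ≤ T i)
    (hT'conn : ∀ i, (T' i).Connected)
    (hT'sub : ∀ i, Set.range vs \ {vs i} ⊆ (T' i).verts)
    (hT'min : ∀ i, ∀ H : G.Subgraph, H ≤ T i → H.Connected →
      Set.range vs \ {vs i} ⊆ H.verts → (T' i).edgeSet.ncard ≤ H.edgeSet.ncard)
    (ℓ : Fin k → ℕ) (hℓ : ∀ i, ℓ i = (T i).edgeSet.ncard - (T' i).edgeSet.ncard)
    (hmin : ∀ j, ℓ i₁ ≤ ℓ j)
    (i j : Fin k) (hij : i ≠ j) (hi : i ≠ i₁) (hj : j ≠ i₁) :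
    ((T i₁).spanningCoe.dist (vs i) (vs j) : ℝ) > (p - 1) / p * sdiam G k + ℓ i₁ := by
  classical
  set d : ℕ := (T i₁).spanningCoe.dist (vs i) (vs j) with hd
  by_contra hcon
  push_neg at hcon
  have hvi : vs i ∈ (T i₁).verts :=
    (hT i₁).2.1 (Or.inl ⟨⟨i, rfl⟩, fun h => hi (hinj h)⟩)
  have hvj : vs j ∈ (T i₁).verts :=
    (hT i₁).2.1 (Or.inl ⟨⟨j, rfl⟩, fun h => hj (hinj h)⟩)
  have hreach : (T i₁).spanningCoe.Reachable (vs i) (vs j) := by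
    have hr := (hT i₁).1.coe.preconnected ⟨vs i, hvi⟩ ⟨vs j, hvj⟩
    exact hr.map ⟨Subtype.val, fun {a b} h => h⟩
  obtain ⟨w, hw⟩ := hreach.exists_walk_length_eq_dist
  let w' := w.map (T i₁).spanningHom
  set P : G.Subgraph := w'.toSubgraph with hP
  have hPcon : P.Connected := w'.toSubgraph_connected
  have hPi : vs i ∈ P.verts := w'.start_mem_verts_toSubgraph
  have hPj : vs j ∈ P.verts := w'.end_mem_verts_toSubgraph
  have hPedge : P.edgeSet.ncard ≤ d := by
    have h1 : P.edgeSet = ↑w'.edges.toFinset := by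
      rw [hP, SimpleGraph.Walk.edgeSet_toSubgraph]; ext e; simp
    rw [h1, Set.ncard_coe_finset]
    calc w'.edges.toFinset.card ≤ w'.edges.length := List.toFinset_card_le _
      _ = w'.length := w'.length_edges
      _ = w.length := SimpleGraph.Walk.length_map _ w
      _ = d := hw
  have hvjT' : vs j ∈ (T' i).verts :=
    hT'sub i ⟨⟨j, rfl⟩, fun h => hij ((hinj h).symm)⟩
  set Hu := T' i ⊔ P with hHu
  have hHcon : Hu.Connected := SimpleGraph.Subgraph.connected_sup (hT'conn i).preconnected hPcon.preconnected ⟨vs j, hvjT', hPj⟩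
  have hHsub : Set.range vs ⊆ Hu.verts := by
    rintro y ⟨m, rfl⟩
    rw [hHu, SimpleGraph.Subgraph.verts_sup]
    by_cases hmi : m = i
    · exact Or.inr (hmi ▸ hPi)
    · exact Or.inl (hT'sub i ⟨⟨m, rfl⟩, fun h => hmi (hinj h)⟩)
  have hkey : sdiam G k ≤ (T' i).edgeSet.ncard + d := by
    rw [← hD]
    calc steinerDist G (Set.range vs) ≤ Hu.edgeSet.ncard := aux_steinerDist_le hHcon hHsub
      _ ≤ (T' i).edgeSet.ncard + P.edgeSet.ncard := by
          rw [hHu, SimpleGraph.Subgraph.edgeSet_sup]; exact Set.ncard_union_le _ _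
      _ ≤ _ := by omega
  have hb_le_a : (T' i).edgeSet.ncard ≤ (T i).edgeSet.ncard :=
    Set.ncard_le_ncard (SimpleGraph.Subgraph.edgeSet_mono (hT'le i)) (Set.toFinite _)
  have hEq : (T' i).edgeSet.ncard + ℓ i = (T i).edgeSet.ncard := by
    rw [hℓ i]; omega
  have ha_le : (T i).edgeSet.ncard ≤ srad G k := by
    rw [(hT i).2.2.2, ← hv₀]
    exact aux_Di_le_srad hG (by omega) hcard vs hinj v₀ (vs i) ⟨i, rfl⟩
  have hl : ℓ i₁ ≤ ℓ i := hmin i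
  have hp0 : (0:ℝ) < p := lt_trans one_pos hp
  have c1 : (sdiam G k : ℝ) ≤ (T' i).edgeSet.ncard + d := by exact_mod_cast hkey
  have c2 : ((T' i).edgeSet.ncard : ℝ) + ℓ i = (T i).edgeSet.ncard := by exact_mod_cast hEq
  have c3 : ((T i).edgeSet.ncard : ℝ) ≤ srad G k := by exact_mod_cast ha_le
  have c4 : (ℓ i₁ : ℝ) ≤ ℓ i := by exact_mod_cast hl
  have key2 : (sdiam G k : ℝ) ≤ srad G k + (p-1)/p * sdiam G k := by linarith
  have e1 : (p-1)/p * (sdiam G k : ℝ) * p = (p-1) * sdiam G k := by field_simp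
  have e2 := mul_le_mul_of_nonneg_right key2 hp0.le
  nlinarith [e1, e2, hps]
end

section
/- For every connected graph G of order at least 4, sdiam_4(G) ≤ (10/7)·srad_4(G). -/
open SimpleGraph

namespace SteinerAux
set_option linter.unusedSectionVars false
set_option maxHeartbeats 1000000

variable {V : Type*} [Fintype V] {G : SimpleGraph V}

lemma walk_split {V' : Type*} {Γ : SimpleGraph V'} (S : V' → Prop) :
    ∀ {u w : V'} (p : Γ.Walk u w), S w →
      ∃ x, S x ∧ ∃ (p₁ : Γ.Walk u x) (p₂ : Γ.Walk x w),
        p = p₁.append p₂ ∧ ∀ z ∈ p₁.support, S z → z = x := by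
  intro u w p
  induction p with
  | nil =>
      intro hw
      refine ⟨_, hw, Walk.nil, Walk.nil, rfl, ?_⟩
      intro z hz _
      simpa using hz
  | @cons a b c adj q ih =>
      intro hw
      by_cases hS : S a
      · refine ⟨a, hS, Walk.nil, Walk.cons adj q, rfl, ?_⟩
        intro z hz _
        simpa using hz
      · obtain ⟨x, hx, p₁, p₂, heq, hprop⟩ := ih hw
        refine ⟨x, hx, Walk.cons adj p₁, p₂, by rw [Walk.cons_append, ← heq], ?_⟩
        intro z hz hSz
        rcases (by simpa [Walk.support_cons] using hz : z = a ∨ z ∈ p₁.support) with rfl | hz'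
        · exact absurd hSz hS
        · exact hprop z hz' hSz

lemma edges_disj {V' : Type*} {Γ : SimpleGraph V'} {x y x' y' w : V'}
    (p : Γ.Walk x y) (q : Γ.Walk x' y')
    (h : ∀ z ∈ p.support, z ∈ q.support → z = w) : p.edges.Disjoint q.edges := by
  intro e hep heq
  induction e with
  | h s t =>
    have h1 := p.fst_mem_support_of_mem_edges hep
    have h2 := p.snd_mem_support_of_mem_edges hep
    have h3 := q.fst_mem_support_of_mem_edges heq
    have h4 := q.snd_mem_support_of_mem_edges heq
    exact (p.adj_of_mem_edges hep).ne (by rw [h s h1 h3, h t h2 h4])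

lemma nodup5 {X : Type*} {l1 l2 l3 l4 l5 : List X}
    (n1 : l1.Nodup) (n2 : l2.Nodup) (n3 : l3.Nodup) (n4 : l4.Nodup) (n5 : l5.Nodup)
    (d12 : l1.Disjoint l2) (d13 : l1.Disjoint l3) (d14 : l1.Disjoint l4)
    (d15 : l1.Disjoint l5) (d23 : l2.Disjoint l3) (d24 : l2.Disjoint l4)
    (d25 : l2.Disjoint l5) (d34 : l3.Disjoint l4) (d35 : l3.Disjoint l5)
    (d45 : l4.Disjoint l5) :
    (l1 ++ (l2 ++ (l3 ++ (l4 ++ l5)))).Nodup := by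
  have n45 : (l4 ++ l5).Nodup := n4.append n5 d45
  have n345 : (l3 ++ (l4 ++ l5)).Nodup :=
    n3.append n45 (List.disjoint_append_right.mpr ⟨d34, d35⟩)
  have n2345 : (l2 ++ (l3 ++ (l4 ++ l5))).Nodup :=
    n2.append n345 (List.disjoint_append_right.mpr
      ⟨d23, List.disjoint_append_right.mpr ⟨d24, d25⟩⟩)
  exact n1.append n2345 (List.disjoint_append_right.mpr
    ⟨d12, List.disjoint_append_right.mpr
      ⟨d13, List.disjoint_append_right.mpr ⟨d14, d15⟩⟩⟩)

lemma top_connected (hG : G.Connected) : (⊤ : G.Subgraph).Connected := by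
  rw [Subgraph.connected_iff']
  exact hG.map (Subgraph.topIso).symm.toHom (Subgraph.topIso).symm.toEquiv.surjective

lemma steinerDist_le {S : Set V} {H : G.Subgraph} (hH : H.Connected) (hS : S ⊆ H.verts) :
    steinerDist G S ≤ H.edgeSet.ncard :=
  Nat.sInf_le ⟨H, hH, hS, rfl⟩

lemma steinerDist_exists (hG : G.Connected) (S : Set V) :
    ∃ H : G.Subgraph, H.Connected ∧ S ⊆ H.verts ∧ H.edgeSet.ncard = steinerDist G S := by
  have hne : {n | ∃ H : G.Subgraph, H.Connected ∧ S ⊆ H.verts ∧ H.edgeSet.ncard = n}.Nonempty :=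
    ⟨(⊤ : G.Subgraph).edgeSet.ncard, ⟨⊤, top_connected hG, by simp [Subgraph.verts_top], rfl⟩⟩
  exact Nat.sInf_mem hne

lemma steinerDist_mono (hG : G.Connected) {S' S : Set V} (h : S' ⊆ S) :
    steinerDist G S' ≤ steinerDist G S := by
  obtain ⟨H, hH, hSH, hcard⟩ := steinerDist_exists hG S
  exact hcard ▸ steinerDist_le hH (h.trans hSH)

lemma steinerDist_le_ecc (hG : G.Connected) {v : V} {S : Finset V} (hv : v ∈ S)
    (h4 : S.card = 4) : steinerDist G (S : Set V) ≤ steinerEcc G 4 v := by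
  refine le_csSup ⟨(⊤ : G.Subgraph).edgeSet.ncard, ?_⟩ ⟨S, hv, h4, rfl⟩
  rintro n ⟨S', _, _, rfl⟩
  exact steinerDist_le (top_connected hG) (by simp [Subgraph.verts_top])

lemma quad_le_ecc (hG : G.Connected) (hcard : 4 ≤ Fintype.card V) (v x y z : V) :
    steinerDist G {v, x, y, z} ≤ steinerEcc G 4 v := by
  classical
  have hle : ({v, x, y, z} : Finset V).card ≤ 4 := by
    refine le_trans (Finset.card_insert_le _ _) ?_
    refine Nat.succ_le_succ (le_trans (Finset.card_insert_le _ _) ?_)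
    refine Nat.succ_le_succ (le_trans (Finset.card_insert_le _ _) ?_)
    simp
  obtain ⟨t, hsub, ht⟩ := Finset.exists_superset_card_eq hle hcard
  have h1 : ({v, x, y, z} : Set V) ⊆ (t : Set V) := by
    intro w hw
    apply hsub
    simpa using hw
  calc steinerDist G {v, x, y, z} ≤ steinerDist G (t : Set V) := steinerDist_mono hG h1
      _ ≤ steinerEcc G 4 v := steinerDist_le_ecc hG (hsub (by simp)) ht

lemma toSubgraph_ncard_le {u w : V} (p : G.Walk u w) :
    p.toSubgraph.edgeSet.ncard ≤ p.length := by
  classical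
  rw [Walk.edgeSet_toSubgraph]
  have : {e | e ∈ p.edges} = ((p.edges.toFinset : Finset (Sym2 V)) : Set (Sym2 V)) := by
    ext e; simp
  rw [show p.edgeSet = _ from this, Set.ncard_coe_finset]
  exact le_trans (List.toFinset_card_le _) (by simp)

lemma attach (hG : G.Connected) {A : Set V} {H : G.Subgraph} (hH : H.Connected)
    (hA : A ⊆ H.verts) (x y : V) (hy : y ∈ H.verts) :
    steinerDist G (insert x A) ≤ H.edgeSet.ncard + G.dist x y := by
  obtain ⟨p, hp⟩ := hG.exists_walk_length_eq_dist x y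
  have hconn : (H ⊔ p.toSubgraph).Connected := by
    refine Subgraph.connected_sup hH.preconnected p.toSubgraph_connected.preconnected ⟨y, ?_⟩
    rw [Subgraph.verts_inf]
    exact ⟨hy, by rw [Walk.mem_verts_toSubgraph]; exact p.end_mem_support⟩
  have hsub : insert x A ⊆ (H ⊔ p.toSubgraph).verts := by
    rw [Subgraph.verts_sup]
    rintro z (rfl | hz)
    · exact Or.inr (by rw [Walk.mem_verts_toSubgraph]; exact p.start_mem_support)
    · exact Or.inl (hA hz)
  refine le_trans (steinerDist_le hconn hsub) ?_
  rw [Subgraph.edgeSet_sup]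
  refine le_trans (Set.ncard_union_le _ _) ?_
  have := toSubgraph_ncard_le p
  omega

lemma coe_edge_mem {Y : G.Subgraph} {e : Sym2 Y.verts} (he : e ∈ Y.coe.edgeSet) :
    Sym2.map (Subtype.val : Y.verts → V) e ∈ Y.edgeSet := by
  induction e with
  | h s t =>
    rw [SimpleGraph.mem_edgeSet] at he
    simpa [Subgraph.mem_edgeSet] using he

lemma assemble (Y : G.Subgraph) {v' w1 w2 a' b' c' : Y.verts}
    (t1 : Y.coe.Walk v' w1) (t2 : Y.coe.Walk w1 w2) (leg1 : Y.coe.Walk w1 a')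
    (leg2 : Y.coe.Walk w2 b') (leg3 : Y.coe.Walk w2 c')
    (hnd : (t1.edges ++ (t2.edges ++ (leg1.edges ++ (leg2.edges ++ leg3.edges)))).Nodup) :
    t1.length + leg1.length + t2.length + leg2.length + leg3.length ≤ Y.edgeSet.ncard ∧
    G.dist (v' : V) (a' : V) ≤ t1.length + leg1.length ∧
    G.dist (v' : V) (b' : V) ≤ t1.length + t2.length + leg2.length ∧
    G.dist (v' : V) (c' : V) ≤ t1.length + t2.length + leg3.length ∧
    G.dist (b' : V) (c' : V) ≤ leg2.length + leg3.length ∧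
    ∃ U : G.Subgraph, U.Connected ∧ (a' : V) ∈ U.verts ∧ (b' : V) ∈ U.verts ∧
      (c' : V) ∈ U.verts ∧
      U.edgeSet.ncard ≤ leg1.length + t2.length + leg2.length + leg3.length := by
  classical
  refine ⟨?_, ?_, ?_, ?_, ?_, ?_⟩
  · -- counting
    set L := t1.edges ++ (t2.edges ++ (leg1.edges ++ (leg2.edges ++ leg3.edges))) with hL
    have hlen : L.length =
        t1.length + (t2.length + (leg1.length + (leg2.length + leg3.length))) := by
      simp [hL]
    have hcard : L.toFinset.card = L.length := List.toFinset_card_of_nodup hnd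
    have himg : (L.toFinset.image (Sym2.map (Subtype.val : Y.verts → V))).card
        = L.toFinset.card :=
      Finset.card_image_of_injective _ (Sym2.map.injective Subtype.val_injective)
    have hYfin : Y.edgeSet.Finite := Set.toFinite _
    have hsub : (L.toFinset.image (Sym2.map (Subtype.val : Y.verts → V)))
        ⊆ hYfin.toFinset := by
      intro e he
      rw [Finset.mem_image] at he
      obtain ⟨e0, he0, rfl⟩ := he
      rw [List.mem_toFinset] at he0
      rw [Set.Finite.mem_toFinset]
      refine coe_edge_mem ?_
      simp only [hL, List.mem_append] at he0
      rcases he0 with h | h | h | h | h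
      · exact t1.edges_subset_edgeSet h
      · exact t2.edges_subset_edgeSet h
      · exact leg1.edges_subset_edgeSet h
      · exact leg2.edges_subset_edgeSet h
      · exact leg3.edges_subset_edgeSet h
    have hfin : L.length ≤ Y.edgeSet.ncard := by
      rw [Set.ncard_eq_toFinset_card _ hYfin]
      calc L.length = (L.toFinset.image (Sym2.map (Subtype.val : Y.verts → V))).card := by
            rw [himg, hcard]
        _ ≤ hYfin.toFinset.card := Finset.card_le_card hsub
    omega
  · simpa [Walk.length_map, Walk.length_append, -Walk.map_append] using
      (SimpleGraph.dist_le ((t1.append leg1).map Y.hom)).trans_eq (Walk.length_map _ _)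
  · simpa [Walk.length_map, Walk.length_append, Nat.add_assoc, -Walk.map_append] using
      (SimpleGraph.dist_le ((t1.append (t2.append leg2)).map Y.hom)).trans_eq (Walk.length_map _ _)
  · simpa [Walk.length_map, Walk.length_append, Nat.add_assoc, -Walk.map_append] using
      (SimpleGraph.dist_le ((t1.append (t2.append leg3)).map Y.hom)).trans_eq (Walk.length_map _ _)
  · simpa [Walk.length_map, Walk.length_append, -Walk.map_append] using
      (SimpleGraph.dist_le ((leg2.reverse.append leg3).map Y.hom)).trans_eq (Walk.length_map _ _)
  · refine ⟨((leg1.reverse.append (t2.append leg2)).map Y.hom).toSubgraph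
        ⊔ ((leg3.map Y.hom).toSubgraph), ?_, ?_, ?_, ?_, ?_⟩
    · refine Subgraph.connected_sup (Walk.toSubgraph_connected _).preconnected
        (Walk.toSubgraph_connected _).preconnected ⟨(w2 : V), ?_⟩
      rw [Subgraph.verts_inf]
      constructor
      · rw [Walk.mem_verts_toSubgraph, Walk.support_map, List.mem_map]
        refine ⟨w2, ?_, rfl⟩
        rw [Walk.mem_support_append_iff]
        exact Or.inr (by rw [Walk.mem_support_append_iff]; exact Or.inl t2.end_mem_support)
      · rw [Walk.mem_verts_toSubgraph]
        exact ((leg3.map Y.hom)).start_mem_support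
    · rw [Subgraph.verts_sup]
      refine Or.inl ?_
      rw [Walk.mem_verts_toSubgraph]
      exact ((leg1.reverse.append (t2.append leg2)).map Y.hom).start_mem_support
    · rw [Subgraph.verts_sup]
      refine Or.inl ?_
      rw [Walk.mem_verts_toSubgraph]
      exact ((leg1.reverse.append (t2.append leg2)).map Y.hom).end_mem_support
    · rw [Subgraph.verts_sup]
      refine Or.inr ?_
      rw [Walk.mem_verts_toSubgraph]
      exact (leg3.map Y.hom).end_mem_support
    · rw [Subgraph.edgeSet_sup]
      refine le_trans (Set.ncard_union_le _ _) ?_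
      have h1 := toSubgraph_ncard_le ((leg1.reverse.append (t2.append leg2)).map Y.hom)
      have h2 := toSubgraph_ncard_le ((leg3.map Y.hom))
      simp only [Walk.length_map, Walk.length_append, Walk.length_reverse] at h1 h2
      omega

lemma decomp (Y : G.Subgraph) (hY : Y.Connected)
    {v a b c : V} (hv : v ∈ Y.verts) (ha : a ∈ Y.verts) (hb : b ∈ Y.verts) (hc : c ∈ Y.verts) :
    ∃ (a' b' c' : V) (el al hh be ga : ℕ),
      ((a' = a ∧ b' = b ∧ c' = c) ∨ (a' = c ∧ b' = a ∧ c' = b) ∨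
        (a' = b ∧ b' = a ∧ c' = c)) ∧
      el + al + hh + be + ga ≤ Y.edgeSet.ncard ∧
      G.dist v a' ≤ el + al ∧ G.dist v b' ≤ el + hh + be ∧ G.dist v c' ≤ el + hh + ga ∧
      G.dist b' c' ≤ be + ga ∧
      ∃ U : G.Subgraph, U.Connected ∧ a' ∈ U.verts ∧ b' ∈ U.verts ∧ c' ∈ U.verts ∧
        U.edgeSet.ncard ≤ al + hh + be + ga := by
  classical
  have hΓ : Y.coe.Connected := hY.coe
  set vv : Y.verts := ⟨v, hv⟩ with hvv
  set ua : Y.verts := ⟨a, ha⟩ with hua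
  set ub : Y.verts := ⟨b, hb⟩ with hub
  set uc : Y.verts := ⟨c, hc⟩ with huc
  obtain ⟨q0⟩ := hΓ.preconnected vv ub
  set Q : Y.coe.Walk vv ub := (q0.toPath : Y.coe.Walk vv ub) with hQdef
  have hQ : Q.IsPath := q0.toPath.2
  obtain ⟨r0⟩ := hΓ.preconnected uc vv
  set R0 : Y.coe.Walk uc vv := (r0.toPath : Y.coe.Walk uc vv) with hR0def
  have hR0 : R0.IsPath := r0.toPath.2
  obtain ⟨w₁, hw₁Q, rc, r₂, hR0eq, Hrc⟩ :=
    walk_split (fun z => z ∈ Q.support) R0 Q.start_mem_support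
  have hrc : rc.IsPath := by
    have h := hR0; rw [hR0eq] at h; exact h.of_append_left
  obtain ⟨p0⟩ := hΓ.preconnected ua vv
  set P0 : Y.coe.Walk ua vv := (p0.toPath : Y.coe.Walk ua vv) with hP0def
  have hP0 : P0.IsPath := p0.toPath.2
  obtain ⟨w₂, hw₂, pa, p₂', hP0eq, Hpa⟩ :=
    walk_split (fun z => z ∈ Q.support ∨ z ∈ rc.support) P0 (Or.inl Q.start_mem_support)
  have hpa : pa.IsPath := by
    have h := hP0; rw [hP0eq] at h; exact h.of_append_left
  have hQspec := Q.take_spec hw₁Q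
  set π₁ := Q.takeUntil w₁ hw₁Q with hπ₁def
  set qb := Q.dropUntil w₁ hw₁Q with hqbdef
  have hπ₁ : π₁.IsPath := hQ.takeUntil hw₁Q
  have hqb : qb.IsPath := hQ.dropUntil hw₁Q
  have hQe : (π₁.edges ++ qb.edges).Nodup := by
    rw [← Walk.edges_append, hQspec]; exact hQ.isTrail.edges_nodup
  have sπ₁Q : ∀ z ∈ π₁.support, z ∈ Q.support := fun z hz => Q.support_takeUntil_subset _ hz
  have sqbQ : ∀ z ∈ qb.support, z ∈ Q.support := fun z hz => Q.support_dropUntil_subset _ hz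
  -- membership transfers for reversed walks
  have mrev : ∀ {x y : Y.verts} (p : Y.coe.Walk x y) (z : Y.verts),
      z ∈ p.reverse.support ↔ z ∈ p.support := by
    intro x y p z; rw [Walk.support_reverse, List.mem_reverse]
  rcases hw₂ with hw₂Q | hw₂rc
  · -- w₂ lies on Q
    have hsplit : w₂ ∈ π₁.support ∨ w₂ ∈ qb.support := by
      rw [← Walk.mem_support_append_iff, hQspec]; exact hw₂Q
    rcases hsplit with hA | hB
    · -- SHAPE A
      set τ := π₁.takeUntil w₂ hA with hτdef
      set σ := π₁.dropUntil w₂ hA with hσdef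
      have hπspec := π₁.take_spec hA
      have hτ : τ.IsPath := hπ₁.takeUntil hA
      have hσ : σ.IsPath := hπ₁.dropUntil hA
      have sτQ : ∀ z ∈ τ.support, z ∈ Q.support :=
        fun z hz => sπ₁Q z (π₁.support_takeUntil_subset _ hz)
      have sσQ : ∀ z ∈ σ.support, z ∈ Q.support :=
        fun z hz => sπ₁Q z (π₁.support_dropUntil_subset _ hz)
      have hQe3 : ((τ.edges ++ σ.edges) ++ qb.edges).Nodup := by
        rw [← Walk.edges_append, hπspec]; exact hQe
      have hn1 := List.nodup_append'.mp hQe3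
      have hn2 := List.nodup_append'.mp hn1.1
      have hd1 := List.disjoint_append_left.mp hn1.2.2
      have hnd : (τ.edges ++ (σ.edges ++ ((pa.reverse).edges ++
          (qb.edges ++ (rc.reverse).edges)))).Nodup := by
        refine nodup5 hτ.isTrail.edges_nodup hσ.isTrail.edges_nodup
          hpa.reverse.isTrail.edges_nodup hqb.isTrail.edges_nodup
          hrc.reverse.isTrail.edges_nodup
          hn2.2.2 ?_ hd1.1 ?_ ?_ hd1.2 ?_ ?_ ?_ ?_
        · exact edges_disj τ pa.reverse
            (fun z hz hz' => Hpa z ((mrev pa z).mp hz') (Or.inl (sτQ z hz)))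
        · exact edges_disj τ rc.reverse
            (fun z hz hz' => Hrc z ((mrev rc z).mp hz') (sτQ z hz))
        · exact edges_disj σ pa.reverse
            (fun z hz hz' => Hpa z ((mrev pa z).mp hz') (Or.inl (sσQ z hz)))
        · exact edges_disj σ rc.reverse
            (fun z hz hz' => Hrc z ((mrev rc z).mp hz') (sσQ z hz))
        · exact edges_disj pa.reverse qb
            (fun z hz hz' => Hpa z ((mrev pa z).mp hz) (Or.inl (sqbQ z hz')))
        · exact edges_disj pa.reverse rc.reverse
            (fun z hz hz' => Hpa z ((mrev pa z).mp hz) (Or.inr ((mrev rc z).mp hz')))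
        · exact edges_disj qb rc.reverse
            (fun z hz hz' => Hrc z ((mrev rc z).mp hz') (sqbQ z hz))
      obtain ⟨k1, k2, k3, k4, k5, U, hU1, hU2, hU3, hU4, hU5⟩ :=
        assemble Y τ σ pa.reverse qb rc.reverse hnd
      exact ⟨a, b, c, τ.length, pa.reverse.length, σ.length, qb.length, rc.reverse.length,
        Or.inl ⟨rfl, rfl, rfl⟩, k1, k2, k3, k4, k5, U, hU1, hU2, hU3, hU4, hU5⟩
    · -- SHAPE B
      set qb₁ := qb.takeUntil w₂ hB with hqb₁def
      set qb₂ := qb.dropUntil w₂ hB with hqb₂def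
      have hqspec := qb.take_spec hB
      have hqb₁ : qb₁.IsPath := hqb.takeUntil hB
      have hqb₂ : qb₂.IsPath := hqb.dropUntil hB
      have sqb₁Q : ∀ z ∈ qb₁.support, z ∈ Q.support :=
        fun z hz => sqbQ z (qb.support_takeUntil_subset _ hz)
      have sqb₂Q : ∀ z ∈ qb₂.support, z ∈ Q.support :=
        fun z hz => sqbQ z (qb.support_dropUntil_subset _ hz)
      have hQe3 : (π₁.edges ++ (qb₁.edges ++ qb₂.edges)).Nodup := by
        rw [← Walk.edges_append, hqspec]; exact hQe
      have hn1 := List.nodup_append'.mp hQe3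
      have hn2 := List.nodup_append'.mp hn1.2.1
      have hd1 := List.disjoint_append_right.mp hn1.2.2
      have hnd : (π₁.edges ++ (qb₁.edges ++ ((rc.reverse).edges ++
          ((pa.reverse).edges ++ qb₂.edges)))).Nodup := by
        refine nodup5 hπ₁.isTrail.edges_nodup hqb₁.isTrail.edges_nodup
          hrc.reverse.isTrail.edges_nodup hpa.reverse.isTrail.edges_nodup
          hqb₂.isTrail.edges_nodup
          hd1.1 ?_ ?_ hd1.2 ?_ ?_ hn2.2.2 ?_ ?_ ?_
        · exact edges_disj π₁ rc.reverse
            (fun z hz hz' => Hrc z ((mrev rc z).mp hz') (sπ₁Q z hz))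
        · exact edges_disj π₁ pa.reverse
            (fun z hz hz' => Hpa z ((mrev pa z).mp hz') (Or.inl (sπ₁Q z hz)))
        · exact edges_disj qb₁ rc.reverse
            (fun z hz hz' => Hrc z ((mrev rc z).mp hz') (sqb₁Q z hz))
        · exact edges_disj qb₁ pa.reverse
            (fun z hz hz' => Hpa z ((mrev pa z).mp hz') (Or.inl (sqb₁Q z hz)))
        · exact edges_disj rc.reverse pa.reverse
            (fun z hz hz' => Hpa z ((mrev pa z).mp hz') (Or.inr ((mrev rc z).mp hz)))
        · exact edges_disj rc.reverse qb₂
            (fun z hz hz' => Hrc z ((mrev rc z).mp hz) (sqb₂Q z hz'))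
        · exact edges_disj pa.reverse qb₂
            (fun z hz hz' => Hpa z ((mrev pa z).mp hz) (Or.inl (sqb₂Q z hz')))
      obtain ⟨k1, k2, k3, k4, k5, U, hU1, hU2, hU3, hU4, hU5⟩ :=
        assemble Y π₁ qb₁ rc.reverse pa.reverse qb₂ hnd
      exact ⟨c, a, b, π₁.length, rc.reverse.length, qb₁.length, pa.reverse.length, qb₂.length,
        Or.inr (Or.inl ⟨rfl, rfl, rfl⟩), k1, k2, k3, k4, k5, U, hU1, hU2, hU3, hU4, hU5⟩
  · -- SHAPE C : w₂ lies on rc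
    have hw₂' : w₂ ∈ rc.reverse.support := (mrev rc w₂).mpr hw₂rc
    set rd₁ := rc.reverse.takeUntil w₂ hw₂' with hrd₁def
    set rd₂ := rc.reverse.dropUntil w₂ hw₂' with hrd₂def
    have hrspec := rc.reverse.take_spec hw₂'
    have hrd₁ : rd₁.IsPath := hrc.reverse.takeUntil hw₂'
    have hrd₂ : rd₂.IsPath := hrc.reverse.dropUntil hw₂'
    have srd₁ : ∀ z ∈ rd₁.support, z ∈ rc.support :=
      fun z hz => (mrev rc z).mp (rc.reverse.support_takeUntil_subset _ hz)
    have srd₂ : ∀ z ∈ rd₂.support, z ∈ rc.support :=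
      fun z hz => (mrev rc z).mp (rc.reverse.support_dropUntil_subset _ hz)
    have hre : (rd₁.edges ++ rd₂.edges).Nodup := by
      rw [← Walk.edges_append, hrspec]; exact hrc.reverse.isTrail.edges_nodup
    have hn1 := List.nodup_append'.mp hre
    have hQn := List.nodup_append'.mp hQe
    have hnd : (π₁.edges ++ (rd₁.edges ++ (qb.edges ++
        ((pa.reverse).edges ++ rd₂.edges)))).Nodup := by
      refine nodup5 hπ₁.isTrail.edges_nodup hn1.1 hQn.2.1
        hpa.reverse.isTrail.edges_nodup hn1.2.1
        ?_ hQn.2.2 ?_ ?_ ?_ ?_ hn1.2.2 ?_ ?_ ?_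
      · exact edges_disj π₁ rd₁ (fun z hz hz' => Hrc z (srd₁ z hz') (sπ₁Q z hz))
      · exact edges_disj π₁ pa.reverse
          (fun z hz hz' => Hpa z ((mrev pa z).mp hz') (Or.inl (sπ₁Q z hz)))
      · exact edges_disj π₁ rd₂ (fun z hz hz' => Hrc z (srd₂ z hz') (sπ₁Q z hz))
      · exact edges_disj rd₁ qb (fun z hz hz' => Hrc z (srd₁ z hz) (sqbQ z hz'))
      · exact edges_disj rd₁ pa.reverse
          (fun z hz hz' => Hpa z ((mrev pa z).mp hz') (Or.inr (srd₁ z hz)))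
      · exact edges_disj qb pa.reverse
          (fun z hz hz' => Hpa z ((mrev pa z).mp hz') (Or.inl (sqbQ z hz)))
      · exact edges_disj qb rd₂ (fun z hz hz' => Hrc z (srd₂ z hz') (sqbQ z hz))
      · exact edges_disj pa.reverse rd₂
          (fun z hz hz' => Hpa z ((mrev pa z).mp hz) (Or.inr (srd₂ z hz')))
    obtain ⟨k1, k2, k3, k4, k5, U, hU1, hU2, hU3, hU4, hU5⟩ :=
      assemble Y π₁ rd₁ qb pa.reverse rd₂ hnd
    exact ⟨b, a, c, π₁.length, qb.length, rd₁.length, pa.reverse.length, rd₂.length,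
      Or.inr (Or.inr ⟨rfl, rfl, rfl⟩), k1, k2, k3, k4, k5, U, hU1, hU2, hU3, hU4, hU5⟩

end SteinerAux

open SteinerAux in
theorem sdiam_four_le {V : Type*} [Fintype V] (G : SimpleGraph V)
    (hG : G.Connected) (hcard : 4 ≤ Fintype.card V) :
    (sdiam G 4 : ℝ) ≤ 10 / 7 * srad G 4 := by
  classical
  have hV : Nonempty V := Fintype.card_pos_iff.mp (by omega)
  obtain ⟨vc, hvc⟩ : ∃ v0, steinerEcc G 4 v0 = srad G 4 := by
    obtain ⟨v0, hv0⟩ := Nat.sInf_mem (Set.range_nonempty (steinerEcc G 4))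
    exact ⟨v0, hv0⟩
  set r := srad G 4 with hrdef
  have KEY : ∀ S : Finset V, S.card = 4 → 7 * steinerDist G (S : Set V) ≤ 10 * r := by
    intro S h4
    set D := steinerDist G (S : Set V) with hD
    -- minimal distance pair
    obtain ⟨x0, hx0, y0, hy0, hxy⟩ := Finset.one_lt_card.mp (by omega : 1 < S.card)
    have hFne : ((S ×ˢ S).filter (fun p => p.1 ≠ p.2)).Nonempty :=
      ⟨(x0, y0), by simp [Finset.mem_product, hx0, hy0, hxy]⟩
    obtain ⟨⟨i, j⟩, hijF, hmin⟩ :=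
      Finset.exists_min_image _ (fun p => G.dist p.1 p.2) hFne
    rw [Finset.mem_filter, Finset.mem_product] at hijF
    obtain ⟨⟨hiS, hjS⟩, hij⟩ := hijF
    set P := G.dist i j with hP
    -- enumerate S.erase i
    have h3 : (S.erase i).card = 3 := by rw [Finset.card_erase_of_mem hiS, h4]
    obtain ⟨a, b, c, hab, hac, hbc, habc⟩ := Finset.card_eq_three.mp h3
    have haE : a ∈ S.erase i := by rw [habc]; simp
    have hbE : b ∈ S.erase i := by rw [habc]; simp
    have hcE : c ∈ S.erase i := by rw [habc]; simp
    have haS := Finset.mem_of_mem_erase haE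
    have hbS := Finset.mem_of_mem_erase hbE
    have hcS := Finset.mem_of_mem_erase hcE
    have hjE : j ∈ S.erase i := Finset.mem_erase.mpr ⟨fun h => hij h.symm, hjS⟩
    -- minimal subgraph for {vc, a, b, c}
    have heW : steinerDist G {vc, a, b, c} ≤ r := by
      rw [← hvc]; exact quad_le_ecc hG hcard vc a b c
    obtain ⟨Y, hYconn, hYsub, hYcard⟩ := steinerDist_exists hG ({vc, a, b, c} : Set V)
    have he_r : Y.edgeSet.ncard ≤ r := by rw [hYcard]; exact heW
    have hvY : vc ∈ Y.verts := hYsub (by simp)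
    have haY : a ∈ Y.verts := hYsub (by simp)
    have hbY : b ∈ Y.verts := hYsub (by simp)
    have hcY : c ∈ Y.verts := hYsub (by simp)
    obtain ⟨a', b', c', el, al, hh, be, ga, hperm, hcount, hda, hdb, hdc, hdbc,
        U, hUconn, haU, hbU, hcU, hUcard⟩ :=
      decomp Y hYconn hvY haY hbY hcY
    -- role facts
    have hrole : b' ≠ c' ∧ a' ∈ S.erase i ∧ b' ∈ S.erase i ∧ c' ∈ S.erase i ∧
        a ∈ U.verts ∧ b ∈ U.verts ∧ c ∈ U.verts := by
      rcases hperm with ⟨rfl, rfl, rfl⟩ | ⟨rfl, rfl, rfl⟩ | ⟨rfl, rfl, rfl⟩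
      · exact ⟨hbc, haE, hbE, hcE, haU, hbU, hcU⟩
      · exact ⟨hab, hcE, haE, hbE, hbU, hcU, haU⟩
      · exact ⟨fun h => hac h, hbE, haE, hcE, hbU, haU, hcU⟩
    obtain ⟨hbc', haE', hbE', hcE', haU', hbU', hcU'⟩ := hrole
    -- B1 : D ≤ r + dist vc w for w ∈ S
    have B1 : ∀ w ∈ S, D ≤ r + G.dist vc w := by
      intro w hw
      have h3w : (S.erase w).card = 3 := by rw [Finset.card_erase_of_mem hw, h4]
      obtain ⟨x, y, z, _, _, _, hxyz⟩ := Finset.card_eq_three.mp h3w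
      have hq : steinerDist G {vc, x, y, z} ≤ r := by
        rw [← hvc]; exact quad_le_ecc hG hcard vc x y z
      obtain ⟨Z, hZc, hZs, hZcard⟩ := steinerDist_exists hG ({vc, x, y, z} : Set V)
      have hZr : Z.edgeSet.ncard ≤ r := by rw [hZcard]; exact hq
      have hsub : (S : Set V) ⊆ insert w ({vc, x, y, z} : Set V) := by
        intro t ht
        rw [Finset.mem_coe] at ht
        by_cases htw : t = w
        · exact htw ▸ Set.mem_insert _ _
        · have : t ∈ S.erase w := Finset.mem_erase.mpr ⟨htw, ht⟩
          rw [hxyz] at this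
          simp only [Finset.mem_insert, Finset.mem_singleton] at this
          rcases this with rfl | rfl | rfl <;> simp
      calc D ≤ steinerDist G (insert w ({vc, x, y, z} : Set V)) := steinerDist_mono hG hsub
        _ ≤ Z.edgeSet.ncard + G.dist w vc := attach hG hZc hZs w vc (hZs (by simp))
        _ ≤ r + G.dist vc w := by rw [SimpleGraph.dist_comm]; omega
    -- B3 : D ≤ (al + hh + be + ga) + P
    have B3 : D ≤ (al + hh + be + ga) + P := by
      obtain ⟨p, hp⟩ := hG.exists_walk_length_eq_dist i j
      have hjU : j ∈ U.verts := by
        have : j ∈ ({a, b, c} : Finset V) := by rw [← habc]; exact hjE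
        simp only [Finset.mem_insert, Finset.mem_singleton] at this
        rcases this with rfl | rfl | rfl
        · exact haU'
        · exact hbU'
        · exact hcU'
      have hconn : (U ⊔ p.toSubgraph).Connected := by
        refine Subgraph.connected_sup hUconn.preconnected p.toSubgraph_connected.preconnected ⟨j, ?_⟩
        rw [Subgraph.verts_inf]
        exact ⟨hjU, by rw [Walk.mem_verts_toSubgraph]; exact p.end_mem_support⟩
      have hsub : (S : Set V) ⊆ (U ⊔ p.toSubgraph).verts := by
        intro t ht
        rw [Finset.mem_coe] at ht
        rw [Subgraph.verts_sup]
        by_cases hti : t = i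
        · refine Or.inr ?_
          rw [Walk.mem_verts_toSubgraph]
          exact hti ▸ p.start_mem_support
        · have : t ∈ S.erase i := Finset.mem_erase.mpr ⟨hti, ht⟩
          rw [habc] at this
          simp only [Finset.mem_insert, Finset.mem_singleton] at this
          rcases this with rfl | rfl | rfl
          · exact Or.inl haU'
          · exact Or.inl hbU'
          · exact Or.inl hcU'
      refine le_trans (steinerDist_le hconn hsub) ?_
      rw [Subgraph.edgeSet_sup]
      refine le_trans (Set.ncard_union_le _ _) ?_
      have h1 := toSubgraph_ncard_le p
      rw [hp] at h1
      omega
    -- P minimal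
    have hPle : P ≤ G.dist b' c' := by
      refine hmin (b', c') ?_
      rw [Finset.mem_filter, Finset.mem_product]
      exact ⟨⟨Finset.mem_of_mem_erase hbE', Finset.mem_of_mem_erase hcE'⟩, hbc'⟩
    have f1 := B1 a' (Finset.mem_of_mem_erase haE')
    have f2 := B1 b' (Finset.mem_of_mem_erase hbE')
    have f3 := B1 c' (Finset.mem_of_mem_erase hcE')
    omega
  -- conclude
  have hB : ∀ u : V, steinerEcc G 4 u ≤ 10 * r / 7 := by
    intro u
    have hune : ∃ S : Finset V, u ∈ S ∧ S.card = 4 := by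
      obtain ⟨t, hsub, ht⟩ := Finset.exists_superset_card_eq
        (show ({u} : Finset V).card ≤ 4 by simp) hcard
      exact ⟨t, hsub (by simp), ht⟩
    obtain ⟨S0, hu0, h40⟩ := hune
    refine csSup_le ⟨steinerDist G (S0 : Set V), ⟨S0, hu0, h40, rfl⟩⟩ ?_
    rintro n ⟨S, hu, h4, rfl⟩
    have := KEY S h4
    omega
  have hsd : sdiam G 4 ≤ 10 * r / 7 :=
    csSup_le (Set.range_nonempty _) (by rintro n ⟨u, rfl⟩; exact hB u)
  have hcast : (sdiam G 4 : ℝ) ≤ ((10 * r / 7 : ℕ) : ℝ) := Nat.cast_le.mpr hsd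
  refine le_trans hcast (le_trans Nat.cast_div_le ?_)
  push_cast
  linarith
end

section
/- For every integer k ≥ 5 there exists a connected graph G_k with sdiam_k(G_k) = k+3 and srad_k(G_k) = k+1; hence the bound sdiam_k(G) ≤ ((k+3)/(k+1))·srad_k(G) is tight for every k ≥ 5. -/
open SimpleGraph in
section
namespace SharpAux

variable {V : Type} [Fintype V] [DecidableEq V] {G : SimpleGraph V}

/-- every connected graph on a fintype has at least `card - 1` edges. -/
lemma conn_card_le {W : Type*} [Fintype W] (Γ : SimpleGraph W) (h : Γ.Connected) :
    Fintype.card W ≤ Γ.edgeSet.ncard + 1 := by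
  classical
  obtain ⟨w0⟩ := h.nonempty
  have hpar : ∀ v : W, v ≠ w0 → ∃ w, Γ.Adj v w ∧ Γ.dist w w0 < Γ.dist v w0 := by
    intro v hv
    obtain ⟨p, hp⟩ := (h.preconnected v w0).exists_walk_length_eq_dist
    have hpos : 0 < Γ.dist v w0 := (h.preconnected v w0).pos_dist_of_ne hv
    cases p with
    | nil => exact absurd rfl hv
    | cons hadj q =>
      refine ⟨_, hadj, ?_⟩
      have := Γ.dist_le q
      simp [Walk.length_cons] at hp
      omega
  set pa : W → W := fun v => if hv : v = w0 then w0 else Classical.choose (hpar v hv) with hpa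
  have hinj : Set.InjOn (fun v => s(v, pa v)) {v : W | v ≠ w0} := by
    rintro u (hu : u ≠ w0) v (hv : v ≠ w0) huv
    simp only [Sym2.eq, Sym2.rel_iff', Prod.mk.injEq, Prod.swap_prod_mk] at huv
    rcases huv with ⟨h1, _⟩ | ⟨h1, h2⟩
    · exact h1
    · exfalso
      have hu' := (Classical.choose_spec (hpar u hu)).2
      have hv' := (Classical.choose_spec (hpar v hv)).2
      rw [hpa] at h1 h2
      simp only [dif_neg hu, dif_neg hv] at h1 h2
      rw [← h1] at hv'
      rw [h2] at hu'
      exact lt_irrefl _ (hu'.trans hv')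
  have hsub : (fun v => s(v, pa v)) '' {v : W | v ≠ w0} ⊆ Γ.edgeSet := by
    rintro e ⟨v, (hv : v ≠ w0), rfl⟩
    have := (Classical.choose_spec (hpar v hv)).1
    simpa [hpa, dif_neg hv] using this
  have h1 : ({v : W | v ≠ w0}).ncard ≤ Γ.edgeSet.ncard := by
    rw [← Set.ncard_image_of_injOn hinj]
    exact Set.ncard_le_ncard hsub (Set.toFinite _)
  have h2 : ({v : W | v ≠ w0}).ncard = Fintype.card W - 1 := by
    have : {v : W | v ≠ w0} = Set.univ \ {w0} := by ext x; simp
    rw [this, Set.ncard_diff_singleton_of_mem (Set.mem_univ _), Set.ncard_univ,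
      Nat.card_eq_fintype_card]
  have : 0 < Fintype.card W := Fintype.card_pos_iff.mpr ⟨w0⟩
  omega

lemma subgraph_verts_le (H : G.Subgraph) (hc : H.Connected) :
    H.verts.ncard ≤ H.edgeSet.ncard + 1 := by
  classical
  have h1 := conn_card_le H.coe hc.coe
  have h2 : H.coe.edgeSet.ncard = H.edgeSet.ncard := by
    rw [← Subgraph.image_coe_edgeSet_coe]
    exact (Set.ncard_image_of_injective _ (Sym2.map.injective Subtype.val_injective)).symm
  have h3 : Fintype.card H.verts = H.verts.ncard := by
    rw [← Nat.card_coe_set_eq, Nat.card_eq_fintype_card]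
  omega

/-- the tree-like subgraph determined by a parent function on a vertex set -/
def treeSub (G : SimpleGraph V) (T : Finset V) (p : V → V) (rt : V)
    (h1 : ∀ v ∈ T, v ≠ rt → p v ∈ T ∧ G.Adj v (p v)) : G.Subgraph where
  verts := ↑T
  Adj u v := (u ∈ T ∧ u ≠ rt ∧ p u = v) ∨ (v ∈ T ∧ v ≠ rt ∧ p v = u)
  adj_sub := by
    rintro u v (⟨h, h', rfl⟩ | ⟨h, h', rfl⟩)
    · exact (h1 _ h h').2
    · exact ((h1 _ h h').2).symm
  edge_vert := by
    rintro u v (⟨h, h', rfl⟩ | ⟨h, h', rfl⟩)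
    · exact h
    · exact (h1 _ h h').1
  symm := by
    constructor
    rintro u v (h | h)
    · exact Or.inr h
    · exact Or.inl h

lemma treeSub_connected (G : SimpleGraph V) (T : Finset V) (p : V → V) (rt : V) (rk : V → ℕ)
    (hrt : rt ∈ T)
    (h1 : ∀ v ∈ T, v ≠ rt → p v ∈ T ∧ G.Adj v (p v))
    (h2 : ∀ v ∈ T, v ≠ rt → rk (p v) < rk v) :
    (treeSub G T p rt h1).Connected := by
  set H := treeSub G T p rt h1 with hH
  have hrt' : rt ∈ H.verts := by simpa [hH, treeSub] using hrt
  have key : ∀ n (v : V) (hv : v ∈ H.verts),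
      rk v ≤ n → H.coe.Reachable ⟨v, hv⟩ ⟨rt, hrt'⟩ := by
    intro n
    induction n with
    | zero =>
      intro v hv hle
      by_cases hne : v = rt
      · subst hne; rfl
      · have := h2 v (by simpa [hH, treeSub] using hv) hne; omega
    | succ n ih =>
      intro v hv hle
      by_cases hne : v = rt
      · subst hne; rfl
      · have hvT : v ∈ T := by simpa [hH, treeSub] using hv
        obtain ⟨hp1, _⟩ := h1 v hvT hne
        have hadj : H.Adj v (p v) := Or.inl ⟨hvT, hne, rfl⟩
        have hpv : p v ∈ H.verts := by simpa [hH, treeSub] using hp1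
        have : H.coe.Adj ⟨v, hv⟩ ⟨p v, hpv⟩ := by simpa using hadj
        have hrk := h2 v hvT hne
        exact this.reachable.trans (ih (p v) hpv (by omega))
  have : Nonempty H.verts := ⟨⟨rt, hrt'⟩⟩
  exact ⟨⟨fun u w => (key _ _ u.2 le_rfl).trans (key _ _ w.2 le_rfl).symm⟩⟩

lemma treeSub_ncard (G : SimpleGraph V) (T : Finset V) (p : V → V) (rt : V) (rk : V → ℕ)
    (hrt : rt ∈ T)
    (h1 : ∀ v ∈ T, v ≠ rt → p v ∈ T ∧ G.Adj v (p v))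
    (h2 : ∀ v ∈ T, v ≠ rt → rk (p v) < rk v) :
    (treeSub G T p rt h1).edgeSet.ncard = T.card - 1 := by
  have he : (treeSub G T p rt h1).edgeSet = (fun v => s(v, p v)) '' (↑T \ {rt}) := by
    ext e
    induction e with
    | _ u v =>
      simp only [Subgraph.mem_edgeSet]
      constructor
      · rintro (⟨h, h', rfl⟩ | ⟨h, h', rfl⟩)
        · exact ⟨u, by simp [h, h']⟩
        · exact ⟨v, by simp [h, h', Sym2.eq_swap]⟩
      · rintro ⟨w, hw, hww⟩
        simp only [Set.mem_diff, Finset.mem_coe, Set.mem_singleton_iff] at hw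
        rw [Sym2.eq_iff] at hww
        rcases hww with ⟨rfl, rfl⟩ | ⟨rfl, rfl⟩
        · exact Or.inl ⟨hw.1, hw.2, rfl⟩
        · exact Or.inr ⟨hw.1, hw.2, rfl⟩
  rw [he]
  have hinj : Set.InjOn (fun v => s(v, p v)) (↑T \ {rt}) := by
    rintro u hu v hv huv
    simp only [Set.mem_diff, Finset.mem_coe, Set.mem_singleton_iff] at hu hv
    rw [Sym2.eq_iff] at huv
    rcases huv with ⟨h1', _⟩ | ⟨h1', h2'⟩
    · exact h1'
    · exfalso
      have hu' := h2 u hu.1 hu.2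
      have hv' := h2 v hv.1 hv.2
      rw [h2'] at hu'; rw [← h1'] at hv'
      omega
  rw [Set.ncard_image_of_injOn hinj, Set.ncard_diff_singleton_of_mem (by simpa using hrt),
    Set.ncard_coe_finset]

/-- membership in cut-closed sets is preserved by connectivity -/
lemma cut_contradiction (H : G.Subgraph) (hc : H.Connected) (C : Set V)
    (hcut : ∀ x y, H.Adj x y → (x ∈ C ↔ y ∈ C))
    {u v : V} (hu : u ∈ H.verts) (hv : v ∈ H.verts) (huC : u ∈ C) (hvC : v ∉ C) : False := by
  have hreach := hc.preconnected ⟨u, hu⟩ ⟨v, hv⟩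
  obtain ⟨w⟩ := hreach
  have : ∀ {x y : H.verts} (_ : H.coe.Walk x y), (↑x ∈ C ↔ ↑y ∈ C) := by
    intro x y w
    induction w with
    | nil => rfl
    | cons h q ih => exact (hcut _ _ (by simpa using h)).trans ih
  exact hvC ((this w).mp huC)

/-- in a connected subgraph with two distinct vertices every vertex has a neighbour -/
lemma exists_neighbor (H : G.Subgraph) (hc : H.Connected) {u w : V}
    (hu : u ∈ H.verts) (hw : w ∈ H.verts) (hne : u ≠ w) : ∃ x, H.Adj u x := by
  obtain ⟨p⟩ := hc.preconnected ⟨u, hu⟩ ⟨w, hw⟩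
  cases p with
  | nil => exact absurd rfl hne
  | cons h q => exact ⟨_, by simpa using h⟩


inductive Vtx (k : ℕ) : Type
  | d : Fin k → Vtx k
  | a : Fin k → Vtx k
  | b : Fin k → Vtx k
  | r : Vtx k
  deriving DecidableEq, Fintype

def tt (k : ℕ) : ℕ := (k + 2) / 2

def R (k : ℕ) : Vtx k → Vtx k → Prop
  | .d i, .a j => i.1 < tt k ∧ j.1 < tt k ∧ i.1 ≠ j.1
  | .d i, .b j => tt k ≤ i.1 + 1 ∧ tt k ≤ j.1 + 1 ∧ i.1 ≠ j.1
  | .a _, .r => True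
  | .b _, .r => True
  | _, _ => False

def Gk (k : ℕ) : SimpleGraph (Vtx k) where
  Adj u v := R k u v ∨ R k v u
  symm := by constructor; rintro u v (h | h); exacts [Or.inr h, Or.inl h]
  loopless := by constructor; rintro u (h | h) <;> cases u <;> simp [R] at h

lemma adj_da {i j : Fin k} : (Gk k).Adj (.d i) (.a j) ↔ i.1 < tt k ∧ j.1 < tt k ∧ i.1 ≠ j.1 := by
  simp [Gk, R]
lemma adj_db {i j : Fin k} : (Gk k).Adj (.d i) (.b j) ↔
    tt k ≤ i.1 + 1 ∧ tt k ≤ j.1 + 1 ∧ i.1 ≠ j.1 := by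
  simp [Gk, R]
lemma adj_d_cases {i : Fin k} {x : Vtx k} (h : (Gk k).Adj (.d i) x) :
    (∃ j : Fin k, x = .a j ∧ i.1 < tt k ∧ j.1 < tt k ∧ i.1 ≠ j.1) ∨
    (∃ j : Fin k, x = .b j ∧ tt k ≤ i.1 + 1 ∧ tt k ≤ j.1 + 1 ∧ i.1 ≠ j.1) := by
  cases x with
  | d j => simp [Gk, R] at h
  | a j => exact Or.inl ⟨j, rfl, adj_da.mp h⟩
  | b j => exact Or.inr ⟨j, rfl, adj_db.mp h⟩
  | r => simp [Gk, R] at h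

section arith
variable (hk : 5 ≤ k)
include hk
lemma tt_ge : 3 ≤ tt k := by unfold tt; omega
lemma tt_le : tt k ≤ k - 2 := by unfold tt; omega
end arith

def oI (k : ℕ) (hk : 5 ≤ k) : Fin k := ⟨tt k - 1, by unfold tt; omega⟩
def lI (k : ℕ) (hk : 5 ≤ k) : Fin k := ⟨k - 1, by omega⟩
@[simp] lemma oI_val (hk : 5 ≤ k) : (oI k hk).1 = tt k - 1 := rfl
@[simp] lemma lI_val (hk : 5 ≤ k) : (lI k hk).1 = k - 1 := rfl

def DD (k : ℕ) : Finset (Vtx k) := Finset.univ.image Vtx.d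
lemma mem_DD {x : Vtx k} : x ∈ DD k ↔ ∃ i, x = Vtx.d i := by
  simp [DD]; exact ⟨fun ⟨i, h⟩ => ⟨i, h.symm⟩, fun ⟨i, h⟩ => ⟨i, h.symm⟩⟩
lemma DD_card : (DD k).card = k := by
  rw [DD, Finset.card_image_of_injective _ (fun x y h => by cases h; rfl)]
  simp

lemma adj_ar {i : Fin k} : (Gk k).Adj (.a i) .r := by simp [Gk, R]
lemma adj_br {i : Fin k} : (Gk k).Adj (.b i) .r := by simp [Gk, R]

def rk : Vtx k → ℕ
  | .d _ => 2
  | .a _ => 1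
  | .b _ => 1
  | .r => 0


lemma steinerDist_le_tree (G : SimpleGraph V) (S : Set V) (T : Finset V) (p : V → V) (rt : V)
    (rka : V → ℕ) (hrt : rt ∈ T)
    (h1 : ∀ v ∈ T, v ≠ rt → p v ∈ T ∧ G.Adj v (p v))
    (h2 : ∀ v ∈ T, v ≠ rt → rka (p v) < rka v)
    (hS : S ⊆ ↑T) :
    steinerDist G S ≤ T.card - 1 := by
  apply Nat.sInf_le
  exact ⟨treeSub G T p rt h1, treeSub_connected G T p rt rka hrt h1 h2, hS,
    treeSub_ncard G T p rt rka hrt h1 h2⟩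

/-- generic 3-extras parent function -/
def pUB (k : ℕ) (x y z : Fin k) : Vtx k → Vtx k
  | .d i => if i.1 + 2 ≤ tt k then .a x else if i.1 = k - 1 then .b y else .b z
  | _ => .r

/-- generic 2-extras parent function -/
def pUB2 (k : ℕ) (x y : Fin k) (c : ℕ) : Vtx k → Vtx k
  | .d i => if i.1 < c then .a x else .b y
  | _ => .r

lemma pUB_cond (hk : 5 ≤ k) :
    ∀ v : Vtx k, v ≠ .r →
      (Gk k).Adj v (pUB k (oI k hk) (oI k hk) (lI k hk) v) ∧
      rk (pUB k (oI k hk) (oI k hk) (lI k hk) v) < rk v := by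
  have ht3 := tt_ge hk; have htle := tt_le hk
  intro v hv
  cases v with
  | d i =>
    have hik := i.2
    by_cases h1 : i.1 + 2 ≤ tt k
    · simp only [pUB, if_pos h1]
      exact ⟨adj_da.mpr ⟨by omega, by simp only [oI_val]; omega, by simp only [oI_val]; omega⟩,
        by simp [rk]⟩
    · by_cases h2 : i.1 = k - 1
      · simp only [pUB, if_neg h1, if_pos h2]
        exact ⟨adj_db.mpr ⟨by omega, by simp only [oI_val]; omega, by simp only [oI_val]; omega⟩,
          by simp [rk]⟩
      · simp only [pUB, if_neg h1, if_neg h2]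
        exact ⟨adj_db.mpr ⟨by omega, by simp only [lI_val]; omega, by simp only [lI_val]; omega⟩,
          by simp [rk]⟩
  | a i => exact ⟨by simpa [pUB] using adj_ar, by simp [pUB, rk]⟩
  | b i => exact ⟨by simpa [pUB] using adj_br, by simp [pUB, rk]⟩
  | r => exact absurd rfl hv

/-- the graph is connected -/
lemma Gk_connected (hk : 5 ≤ k) : (Gk k).Connected := by
  have hcond : ∀ v ∈ (Finset.univ : Finset (Vtx k)), v ≠ .r →
      pUB k (oI k hk) (oI k hk) (lI k hk) v ∈ Finset.univ ∧
      (Gk k).Adj v (pUB k (oI k hk) (oI k hk) (lI k hk) v) := by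
    intro v _ hv
    exact ⟨Finset.mem_univ _, (pUB_cond hk v hv).1⟩
  have hconn := treeSub_connected (Gk k) Finset.univ _ Vtx.r rk (Finset.mem_univ _) hcond
    (fun v _ hv => (pUB_cond hk v hv).2)
  have : Nonempty (Vtx k) := ⟨.r⟩
  constructor
  intro u v
  have hu : u ∈ (treeSub (Gk k) Finset.univ _ Vtx.r hcond).verts := by
    simp [treeSub]
  have hv' : v ∈ (treeSub (Gk k) Finset.univ _ Vtx.r hcond).verts := by
    simp [treeSub]
  have := hconn.coe.preconnected ⟨u, hu⟩ ⟨v, hv'⟩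
  exact this.map (SimpleGraph.Subgraph.hom _)

/-- the universal `≤ card + 3` upper bound -/
lemma steiner_le_card_add_three (hk : 5 ≤ k) (S : Finset (Vtx k)) :
    steinerDist (Gk k) ↑S ≤ S.card + 3 := by
  have ht3 := tt_ge hk; have htle := tt_le hk
  set x : Fin k := oI k hk with hx
  set z : Fin k := lI k hk with hz
  set T : Finset (Vtx k) := insert .r (insert (.a x) (insert (.b x) (insert (.b z) S))) with hT
  have hsub : steinerDist (Gk k) ↑S ≤ T.card - 1 := by
    apply steinerDist_le_tree (Gk k) ↑S T (pUB k x x z) .r rk (by simp [hT])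
    · intro v hv hne
      refine ⟨?_, (pUB_cond hk v hne).1⟩
      cases v with
      | d i =>
        by_cases h1 : i.1 + 2 ≤ tt k
        · simp [pUB, if_pos h1, hT]
        · by_cases h2 : i.1 = k - 1
          · simp [pUB, if_neg h1, if_pos h2, hT]
          · simp [pUB, if_neg h1, if_neg h2, hT]
      | a i => simp [pUB, hT]
      | b i => simp [pUB, hT]
      | r => exact absurd rfl hne
    · exact fun v _ hne => (pUB_cond hk v hne).2
    · intro s hs; simp only [hT, Finset.coe_insert, Set.mem_insert_iff]; tauto
  have hcard : T.card ≤ S.card + 4 := by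
    have c1 := Finset.card_insert_le (Vtx.r) (insert (.a x) (insert (.b x) (insert (.b z) S)))
    have c2 := Finset.card_insert_le (Vtx.a x) (insert (.b x) (insert (.b z) S))
    have c3 := Finset.card_insert_le (Vtx.b x) (insert (.b z) S)
    have c4 := Finset.card_insert_le (Vtx.b z) S
    rw [hT]; omega
  omega


/-- the `≤ k + 1` upper bound for sets containing `r` -/
lemma steiner_le_with_r (hk : 5 ≤ k) (S : Finset (Vtx k)) (hr : .r ∈ S) (hcard : S.card = k) :
    steinerDist (Gk k) ↑S ≤ k + 1 := by
  have ht3 := tt_ge hk; have htle := tt_le hk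
  -- find a missing terminal
  have hmiss : ∃ i : Fin k, Vtx.d i ∉ S := by
    by_contra hcon
    push_neg at hcon
    have hsub : insert Vtx.r (DD k) ⊆ S := by
      intro x hx
      rcases Finset.mem_insert.mp hx with rfl | hx
      · exact hr
      · obtain ⟨i, rfl⟩ := mem_DD.mp hx; exact hcon i
    have h1 : (insert Vtx.r (DD k)).card = k + 1 := by
      rw [Finset.card_insert_of_notMem (by simp [mem_DD]), DD_card]
    have := Finset.card_le_card hsub
    omega
  obtain ⟨w, hw⟩ := hmiss
  -- choose the two connectors
  by_cases hcase : w.1 + 2 ≤ tt k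
  case pos =>
    -- use a_w and b_o, cut at t
    set T : Finset (Vtx k) := insert (.a w) (insert (.b (oI k hk)) S) with hT
    have hsub : steinerDist (Gk k) ↑S ≤ T.card - 1 := by
      apply steinerDist_le_tree (Gk k) ↑S T (pUB2 k w (oI k hk) (tt k)) .r rk
        (by simp [hT, hr])
      · intro v hv hne
        cases v with
        | d i =>
          have hiS : Vtx.d i ∈ S := by
            simp only [hT, Finset.mem_insert] at hv
            rcases hv with h | h | h
            · exact absurd h (by simp)
            · exact absurd h (by simp)
            · exact h
          have hiw : i ≠ w := fun h => hw (h ▸ hiS)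
          have hiw' : i.1 ≠ w.1 := fun h => hiw (Fin.ext h)
          by_cases h1 : i.1 < tt k
          · refine ⟨by simp [pUB2, if_pos h1, hT], ?_⟩
            simp only [pUB2, if_pos h1]
            exact adj_da.mpr ⟨h1, by omega, by omega⟩
          · refine ⟨by simp [pUB2, if_neg h1, hT], ?_⟩
            simp only [pUB2, if_neg h1]
            exact adj_db.mpr ⟨by omega, by simp only [oI_val]; omega, by simp only [oI_val]; omega⟩
        | a i => exact ⟨by simp [pUB2, hT, hr], by simpa [pUB2] using adj_ar⟩
        | b i => exact ⟨by simp [pUB2, hT, hr], by simpa [pUB2] using adj_br⟩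
        | r => exact absurd rfl hne
      · intro v hv hne
        cases v with
        | d i => by_cases h1 : i.1 < tt k <;> simp [pUB2, h1, rk]
        | a i => simp [pUB2, rk]
        | b i => simp [pUB2, rk]
        | r => exact absurd rfl hne
      · intro s hs; simp only [hT, Finset.coe_insert, Set.mem_insert_iff]; tauto
    refine le_trans hsub ?_
    have hc1 := Finset.card_insert_le (Vtx.a w) (insert (.b (oI k hk)) S)
    have hc2 := Finset.card_insert_le (Vtx.b (oI k hk)) S
    simp only [hT]
    omega
  case neg =>
    -- use a_o and b_w, cut at t - 1
    set T : Finset (Vtx k) := insert (.a (oI k hk)) (insert (.b w) S) with hT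
    have hsub : steinerDist (Gk k) ↑S ≤ T.card - 1 := by
      apply steinerDist_le_tree (Gk k) ↑S T (pUB2 k (oI k hk) w (tt k - 1)) .r rk
        (by simp [hT, hr])
      · intro v hv hne
        cases v with
        | d i =>
          have hiS : Vtx.d i ∈ S := by
            simp only [hT, Finset.mem_insert] at hv
            rcases hv with h | h | h
            · exact absurd h (by simp)
            · exact absurd h (by simp)
            · exact h
          have hiw : i ≠ w := fun h => hw (h ▸ hiS)
          have hiw' : i.1 ≠ w.1 := fun h => hiw (Fin.ext h)
          by_cases h1 : i.1 < tt k - 1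
          · refine ⟨by simp [pUB2, if_pos h1, hT], ?_⟩
            simp only [pUB2, if_pos h1]
            exact adj_da.mpr ⟨by omega, by simp only [oI_val]; omega, by simp only [oI_val]; omega⟩
          · refine ⟨by simp [pUB2, if_neg h1, hT], ?_⟩
            simp only [pUB2, if_neg h1]
            exact adj_db.mpr ⟨by omega, by omega, by omega⟩
        | a i => exact ⟨by simp [pUB2, hT, hr], by simpa [pUB2] using adj_ar⟩
        | b i => exact ⟨by simp [pUB2, hT, hr], by simpa [pUB2] using adj_br⟩
        | r => exact absurd rfl hne
      · intro v hv hne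
        cases v with
        | d i => by_cases h1 : i.1 < tt k - 1 <;> simp [pUB2, h1, rk]
        | a i => simp [pUB2, rk]
        | b i => simp [pUB2, rk]
        | r => exact absurd rfl hne
      · intro s hs; simp only [hT, Finset.coe_insert, Set.mem_insert_iff]; tauto
    refine le_trans hsub ?_
    have hc1 := Finset.card_insert_le (Vtx.a (oI k hk)) (insert (.b w) S)
    have hc2 := Finset.card_insert_le (Vtx.b w) S
    simp only [hT]
    omega


-- ===== new material =====

/-- classify the `H`-neighbours of a terminal -/
lemma nbr_cases (H : (Gk k).Subgraph) (hc : H.Connected) {i : Fin k}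
    (hi : Vtx.d i ∈ H.verts) {w : Vtx k} (hw : w ∈ H.verts) (hne : Vtx.d i ≠ w) :
    (∃ z : Fin k, Vtx.a z ∈ H.verts ∧ i.1 < tt k ∧ z.1 < tt k ∧ i.1 ≠ z.1) ∨
    (∃ z : Fin k, Vtx.b z ∈ H.verts ∧ tt k ≤ i.1 + 1 ∧ tt k ≤ z.1 + 1 ∧ i.1 ≠ z.1) := by
  obtain ⟨x, hx⟩ := exists_neighbor H hc hi hw hne
  have hG := H.adj_sub hx
  have hxP : x ∈ H.verts := H.edge_vert hx.symm
  rcases adj_d_cases hG with ⟨j, rfl, h⟩ | ⟨j, rfl, h⟩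
  · exact Or.inl ⟨j, hxP, h⟩
  · exact Or.inr ⟨j, hxP, h⟩

/-- cut lemma, `a`-side: if the only real `a` possibly present is `a_o` and `r` is absent,
then an `a` and a `b` vertex cannot both be present. -/
lemma cutA (hk : 5 ≤ k) (H : (Gk k).Subgraph) (hc : H.Connected)
    (honlyA : ∀ w : Fin k, Vtx.a w ∈ H.verts → w.1 < tt k → w.1 = tt k - 1)
    (hr : Vtx.r ∉ H.verts)
    {z y : Fin k} (hz : Vtx.a z ∈ H.verts) (hy : Vtx.b y ∈ H.verts) : False := by
  have ht3 := tt_ge hk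
  set C : Set (Vtx k) :=
    {x | (∃ w : Fin k, x = .a w) ∨ (∃ j : Fin k, x = .d j ∧ j.1 + 1 < tt k)} with hC
  refine cut_contradiction H hc C ?_ hz hy (by simp [hC]) (by simp [hC])
  intro x y' hxy
  have hG := H.adj_sub hxy
  have hxP : x ∈ H.verts := H.edge_vert hxy
  have hyP : y' ∈ H.verts := H.edge_vert hxy.symm
  cases x with
  | d i =>
    cases y' with
    | d j => simp [Gk, R] at hG
    | a j =>
      have h := adj_da.mp hG
      have := honlyA j hyP h.2.1
      simp only [hC, Set.mem_setOf_eq]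
      constructor
      · intro _; exact Or.inl ⟨j, rfl⟩
      · intro _; exact Or.inr ⟨i, rfl, by omega⟩
    | b j =>
      have h := adj_db.mp hG
      simp only [hC, Set.mem_setOf_eq]
      constructor
      · rintro (⟨w, hw⟩ | ⟨j', hj', hlt⟩)
        · exact absurd hw (by simp)
        · exfalso; injection hj' with hj2; rw [Fin.ext_iff] at hj2; omega
      · rintro (⟨w, hw⟩ | ⟨j', hj', _⟩) <;> simp_all
    | r => simp [Gk, R] at hG
  | a i =>
    cases y' with
    | d j =>
      have h := adj_da.mp hG.symm
      have := honlyA i hxP h.2.1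
      simp only [hC, Set.mem_setOf_eq]
      constructor
      · intro _; exact Or.inr ⟨j, rfl, by omega⟩
      · intro _; exact Or.inl ⟨i, rfl⟩
    | a j => simp [Gk, R] at hG
    | b j => simp [Gk, R] at hG
    | r => exact absurd hyP hr
  | b i =>
    cases y' with
    | d j =>
      have h := adj_db.mp hG.symm
      simp only [hC, Set.mem_setOf_eq]
      constructor
      · rintro (⟨w, hw⟩ | ⟨j', hj', _⟩) <;> simp_all
      · rintro (⟨w, hw⟩ | ⟨j', hj', hlt⟩)
        · exact absurd hw (by simp)
        · exfalso; injection hj' with hj2; rw [Fin.ext_iff] at hj2; omega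
    | a j => simp [Gk, R] at hG
    | b j => simp [Gk, R] at hG
    | r => exact absurd hyP hr
  | r => exact absurd hxP hr

/-- cut lemma, `b`-side -/
lemma cutB (hk : 5 ≤ k) (H : (Gk k).Subgraph) (hc : H.Connected)
    (honlyB : ∀ w : Fin k, Vtx.b w ∈ H.verts → tt k ≤ w.1 + 1 → w.1 = tt k - 1)
    (hr : Vtx.r ∉ H.verts)
    {z y : Fin k} (hz : Vtx.a z ∈ H.verts) (hy : Vtx.b y ∈ H.verts) : False := by
  have ht3 := tt_ge hk
  set C : Set (Vtx k) :=
    {x | (∃ w : Fin k, x = .b w) ∨ (∃ j : Fin k, x = .d j ∧ tt k ≤ j.1)} with hC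
  refine cut_contradiction H hc C ?_ hy hz (by simp [hC]) (by simp [hC])
  intro x y' hxy
  have hG := H.adj_sub hxy
  have hxP : x ∈ H.verts := H.edge_vert hxy
  have hyP : y' ∈ H.verts := H.edge_vert hxy.symm
  cases x with
  | d i =>
    cases y' with
    | d j => simp [Gk, R] at hG
    | a j =>
      have h := adj_da.mp hG
      simp only [hC, Set.mem_setOf_eq]
      constructor
      · rintro (⟨w, hw⟩ | ⟨j', hj', hlt⟩)
        · exact absurd hw (by simp)
        · exfalso; injection hj' with hj2; rw [Fin.ext_iff] at hj2; omega
      · rintro (⟨w, hw⟩ | ⟨j', hj', _⟩) <;> simp_all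
    | b j =>
      have h := adj_db.mp hG
      have := honlyB j hyP h.2.1
      simp only [hC, Set.mem_setOf_eq]
      constructor
      · intro _; exact Or.inl ⟨j, rfl⟩
      · intro _; exact Or.inr ⟨i, rfl, by omega⟩
    | r => simp [Gk, R] at hG
  | a i =>
    cases y' with
    | d j =>
      have h := adj_da.mp hG.symm
      simp only [hC, Set.mem_setOf_eq]
      constructor
      · rintro (⟨w, hw⟩ | ⟨j', hj', _⟩) <;> simp_all
      · rintro (⟨w, hw⟩ | ⟨j', hj', hlt⟩)
        · exact absurd hw (by simp)
        · exfalso; injection hj' with hj2; rw [Fin.ext_iff] at hj2; omega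
    | a j => simp [Gk, R] at hG
    | b j => simp [Gk, R] at hG
    | r => exact absurd hyP hr
  | b i =>
    cases y' with
    | d j =>
      have h := adj_db.mp hG.symm
      have := honlyB i hxP h.2.1
      simp only [hC, Set.mem_setOf_eq]
      constructor
      · intro _; exact Or.inr ⟨j, rfl, by omega⟩
      · intro _; exact Or.inl ⟨i, rfl⟩
    | a j => simp [Gk, R] at hG
    | b j => simp [Gk, R] at hG
    | r => exact absurd hyP hr
  | r => exact absurd hxP hr


/-- counting helper: base plus two extras -/
lemma ncard_extras2 (P : Set (Vtx k)) (base : Finset (Vtx k)) (hbase : ↑base ⊆ P)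
    (x y : Vtx k) (hx : x ∈ P) (hy : y ∈ P) (hxb : x ∉ base) (hyb : y ∉ base) (hxy : x ≠ y) :
    base.card + 2 ≤ P.ncard := by
  have hsub : ↑(insert x (insert y base)) ⊆ P := by
    intro u hu
    simp only [Finset.coe_insert, Set.mem_insert_iff, Finset.mem_coe] at hu
    rcases hu with rfl | rfl | hu
    · exact hx
    · exact hy
    · exact hbase hu
  have hcard : (insert x (insert y base)).card = base.card + 2 := by
    rw [Finset.card_insert_of_notMem (by simp [hxb, hxy]),
      Finset.card_insert_of_notMem hyb]
  calc base.card + 2 = (insert x (insert y base)).card := hcard.symm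
    _ = (↑(insert x (insert y base)) : Set (Vtx k)).ncard := (Set.ncard_coe_finset _).symm
    _ ≤ P.ncard := Set.ncard_le_ncard hsub (Set.toFinite _)

/-- counting helper: base plus four extras -/
lemma ncard_extras4 (P : Set (Vtx k)) (base : Finset (Vtx k)) (hbase : ↑base ⊆ P)
    (x y z w : Vtx k) (hx : x ∈ P) (hy : y ∈ P) (hz : z ∈ P) (hw : w ∈ P)
    (hxb : x ∉ base) (hyb : y ∉ base) (hzb : z ∉ base) (hwb : w ∉ base)
    (hxy : x ≠ y) (hxz : x ≠ z) (hxw : x ≠ w) (hyz : y ≠ z) (hyw : y ≠ w) (hzw : z ≠ w) :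
    base.card + 4 ≤ P.ncard := by
  have hsub : ↑(insert x (insert y (insert z (insert w base)))) ⊆ P := by
    intro u hu
    simp only [Finset.coe_insert, Set.mem_insert_iff, Finset.mem_coe] at hu
    rcases hu with rfl | rfl | rfl | rfl | hu
    · exact hx
    · exact hy
    · exact hz
    · exact hw
    · exact hbase hu
  have hcard : (insert x (insert y (insert z (insert w base)))).card = base.card + 4 := by
    rw [Finset.card_insert_of_notMem (by simp [hxb, hxy, hxz, hxw]),
      Finset.card_insert_of_notMem (by simp [hyb, hyz, hyw]),
      Finset.card_insert_of_notMem (by simp [hzb, hzw]),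
      Finset.card_insert_of_notMem hwb]
  calc base.card + 4 = _ := hcard.symm
    _ = (↑(insert x (insert y (insert z (insert w base)))) : Set (Vtx k)).ncard :=
      (Set.ncard_coe_finset _).symm
    _ ≤ P.ncard := Set.ncard_le_ncard hsub (Set.toFinite _)

lemma a_not_mem_DD {i : Fin k} : Vtx.a i ∉ DD k := by simp [mem_DD]
lemma b_not_mem_DD {i : Fin k} : Vtx.b i ∉ DD k := by simp [mem_DD]
lemma r_not_mem_DD : (Vtx.r : Vtx k) ∉ DD k := by simp [mem_DD]

/-- The main lower bound for the full terminal set: any connected subgraph containing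
all terminals has at least `k + 4` vertices. -/
lemma DD_lower (hk : 5 ≤ k) (H : (Gk k).Subgraph) (hc : H.Connected)
    (hsub : ↑(DD k) ⊆ H.verts) : k + 4 ≤ H.verts.ncard := by
  have ht3 := tt_ge hk; have htle := tt_le hk
  have hD : ∀ i : Fin k, Vtx.d i ∈ H.verts := fun i => hsub (by simp [mem_DD])
  -- neighbour classification for each terminal
  have nbr : ∀ i : Fin k,
      (∃ z : Fin k, Vtx.a z ∈ H.verts ∧ i.1 < tt k ∧ z.1 < tt k ∧ i.1 ≠ z.1) ∨
      (∃ z : Fin k, Vtx.b z ∈ H.verts ∧ tt k ≤ i.1 + 1 ∧ tt k ≤ z.1 + 1 ∧ i.1 ≠ z.1) := by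
    intro i
    by_cases h0 : i.1 = 0
    · exact nbr_cases H hc (hD i) (hD ⟨1, by omega⟩)
        (by simp [Fin.ext_iff]; omega)
    · exact nbr_cases H hc (hD i) (hD ⟨0, by omega⟩)
        (by simp [Fin.ext_iff]; omega)
  -- the `a`-neighbour of `d 0`
  have hA0 : ∃ z : Fin k, Vtx.a z ∈ H.verts ∧ z.1 < tt k ∧ z.1 ≠ 0 := by
    rcases nbr ⟨0, by omega⟩ with ⟨z, hz, _, hzt, hz0⟩ | ⟨z, _, habs, _⟩
    · exact ⟨z, hz, hzt, fun h => hz0 (by simp [h])⟩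
    · simp at habs; omega
  -- the `b`-neighbour of `d (k-1)`
  have hBk : ∃ y : Fin k, Vtx.b y ∈ H.verts ∧ tt k ≤ y.1 + 1 ∧ y.1 ≠ k - 1 := by
    rcases nbr ⟨k - 1, by omega⟩ with ⟨y, _, habs, _⟩ | ⟨y, hy, _, hyt, hyn⟩
    · simp at habs; omega
    · exact ⟨y, hy, hyt, fun h => hyn (by simp [h])⟩
  set CA : Prop := ∃ z : Fin k, z.1 < tt k ∧ z.1 ≠ tt k - 1 ∧ Vtx.a z ∈ H.verts with hCA
  set CB : Prop := ∃ y : Fin k, tt k ≤ y.1 ∧ Vtx.b y ∈ H.verts with hCB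
  -- two distinct real a's from CA
  have twoA : CA → ∃ z z' : Fin k, z.1 ≠ z'.1 ∧ z.1 < tt k ∧ z'.1 < tt k ∧
      Vtx.a z ∈ H.verts ∧ Vtx.a z' ∈ H.verts := by
    rintro ⟨z, hzt, hzo, hz⟩
    rcases nbr z with ⟨z', hz', _, hzt', hne⟩ | ⟨z', _, habs, _⟩
    · exact ⟨z, z', hne, hzt, hzt', hz, hz'⟩
    · omega
  have twoB : CB → ∃ y y' : Fin k, y.1 ≠ y'.1 ∧ tt k ≤ y.1 + 1 ∧ tt k ≤ y'.1 + 1 ∧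
      Vtx.b y ∈ H.verts ∧ Vtx.b y' ∈ H.verts := by
    rintro ⟨y, hyt, hy⟩
    rcases nbr y with ⟨y', _, habs, _⟩ | ⟨y', hy', _, hyt', hne⟩
    · omega
    · exact ⟨y, y', hne, by omega, hyt', hy, hy'⟩
  -- at least one of CA, CB holds
  have hAB : CA ∨ CB := by
    rcases nbr ⟨tt k - 1, by omega⟩ with ⟨z, hz, _, hzt, hne⟩ | ⟨y, hy, _, hyt, hne⟩
    · exact Or.inl ⟨z, hzt, fun h => hne (by simp [h]), hz⟩
    · exact Or.inr ⟨y, by simp at hne ⊢; omega, hy⟩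
  -- if CA fails then r is present
  have notA : ¬ CA → Vtx.r ∈ H.verts := by
    intro hnA
    by_contra hr
    obtain ⟨z, hz, _, _⟩ := hA0
    obtain ⟨y, hy, _, _⟩ := hBk
    refine cutA hk H hc ?_ hr hz hy
    intro w hw hwt
    by_contra hwo
    exact hnA ⟨w, hwt, hwo, hw⟩
  have notB : ¬ CB → Vtx.r ∈ H.verts := by
    intro hnB
    by_contra hr
    obtain ⟨z, hz, _, _⟩ := hA0
    obtain ⟨y, hy, _, _⟩ := hBk
    refine cutB hk H hc ?_ hr hz hy
    intro w hw hwt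
    by_contra hwo
    exact hnB ⟨w, by omega, hw⟩
  have hDDcard : (DD k).card = k := DD_card
  by_cases hA : CA <;> by_cases hB : CB
  · -- both: two a's and two b's
    obtain ⟨z, z', hne, _, _, hz, hz'⟩ := twoA hA
    obtain ⟨y, y', hne', _, _, hy, hy'⟩ := twoB hB
    have := ncard_extras4 H.verts (DD k) hsub (.a z) (.a z') (.b y) (.b y') hz hz' hy hy'
      a_not_mem_DD a_not_mem_DD b_not_mem_DD b_not_mem_DD
      (by simp [Fin.ext_iff]; omega) (by simp) (by simp) (by simp) (by simp)
      (by simp [Fin.ext_iff]; omega)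
    omega
  · -- CA, not CB : two a's, one b, and r
    obtain ⟨z, z', hne, _, _, hz, hz'⟩ := twoA hA
    obtain ⟨y, hy, _, _⟩ := hBk
    have hrP := notB hB
    have := ncard_extras4 H.verts (DD k) hsub (.a z) (.a z') (.b y) .r hz hz' hy hrP
      a_not_mem_DD a_not_mem_DD b_not_mem_DD r_not_mem_DD
      (by simp [Fin.ext_iff]; omega) (by simp) (by simp) (by simp) (by simp) (by simp)
    omega
  · -- CB, not CA : two b's, one a, and r
    obtain ⟨y, y', hne, _, _, hy, hy'⟩ := twoB hB
    obtain ⟨z, hz, _, _⟩ := hA0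
    have hrP := notA hA
    have := ncard_extras4 H.verts (DD k) hsub (.a z) (.b y) (.b y') .r hz hy hy' hrP
      a_not_mem_DD b_not_mem_DD b_not_mem_DD r_not_mem_DD
      (by simp) (by simp) (by simp) (by simp [Fin.ext_iff]; omega) (by simp) (by simp)
    omega
  · exact absurd hAB (by simp [hA, hB])


def Dm (k : ℕ) (hk : 5 ≤ k) : Finset (Vtx k) := (DD k).erase (.d (lI k hk))

lemma mem_Dm {hk : 5 ≤ k} {x : Vtx k} : x ∈ Dm k hk ↔ ∃ i : Fin k, x = .d i ∧ i.1 < k - 1 := by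
  simp only [Dm, Finset.mem_erase, mem_DD]
  constructor
  · rintro ⟨hne, i, rfl⟩
    refine ⟨i, rfl, ?_⟩
    have h2 : i ≠ lI k hk := fun h => hne (by rw [h])
    have h3 := i.2
    have h4 : i.1 ≠ k - 1 := fun h => h2 (Fin.ext (by rw [h, lI_val]))
    omega
  · rintro ⟨i, rfl, hi⟩
    exact ⟨by simp [Fin.ext_iff]; omega, i, rfl⟩

lemma Dm_card (hk : 5 ≤ k) : (Dm k hk).card = k - 1 := by
  rw [Dm, Finset.card_erase_of_mem (by simp [mem_DD]), DD_card]

/-- The per-vertex lower bound: any connected subgraph containing `v` together with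
the terminals `d_0 … d_{k-2}` has at least `k + 2` vertices. -/
lemma Sv_lower (hk : 5 ≤ k) (v : Vtx k)
    (hv : (∃ i, v = Vtx.a i) ∨ (∃ i, v = Vtx.b i) ∨ v = .r)
    (H : (Gk k).Subgraph) (hc : H.Connected)
    (hsub : ↑(insert v (Dm k hk)) ⊆ H.verts) : k + 2 ≤ H.verts.ncard := by
  have ht3 := tt_ge hk; have htle := tt_le hk
  set base : Finset (Vtx k) := insert v (Dm k hk) with hbase
  have hvnotDm : v ∉ Dm k hk := by
    rcases hv with ⟨i, rfl⟩ | ⟨i, rfl⟩ | rfl <;> simp [mem_Dm]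
  have hbcard : base.card = k := by
    rw [hbase, Finset.card_insert_of_notMem hvnotDm, Dm_card hk]; omega
  have hD : ∀ j : Fin k, j.1 < k - 1 → Vtx.d j ∈ H.verts := by
    intro j hj
    apply hsub
    rw [hbase]
    simp only [Finset.coe_insert, Set.mem_insert_iff, Finset.mem_coe, mem_Dm]
    exact Or.inr ⟨j, rfl, hj⟩
  have hvP : v ∈ H.verts := hsub (by simp [hbase])
  have nbr : ∀ i : Fin k, i.1 < k - 1 →
      (∃ z : Fin k, Vtx.a z ∈ H.verts ∧ i.1 < tt k ∧ z.1 < tt k ∧ i.1 ≠ z.1) ∨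
      (∃ z : Fin k, Vtx.b z ∈ H.verts ∧ tt k ≤ i.1 + 1 ∧ tt k ≤ z.1 + 1 ∧ i.1 ≠ z.1) := by
    intro i hi
    by_cases h0 : i.1 = 0
    · exact nbr_cases H hc (hD i hi) (hD ⟨1, by omega⟩ (by simp; omega))
        (by simp [Fin.ext_iff]; omega)
    · exact nbr_cases H hc (hD i hi) (hD ⟨0, by omega⟩ (by simp; omega))
        (by simp [Fin.ext_iff]; omega)
  have hA0 : ∃ z : Fin k, Vtx.a z ∈ H.verts ∧ z.1 < tt k ∧ z.1 ≠ 0 := by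
    rcases nbr ⟨0, by omega⟩ (by simp; omega) with ⟨z, hz, _, hzt, hz0⟩ | ⟨z, _, habs, _⟩
    · exact ⟨z, hz, hzt, fun h => hz0 (by simp [h])⟩
    · simp at habs; omega
  have hBk : ∃ y : Fin k, Vtx.b y ∈ H.verts ∧ tt k ≤ y.1 + 1 ∧ y.1 ≠ k - 2 := by
    rcases nbr ⟨k - 2, by omega⟩ (by simp; omega) with ⟨y, _, habs, _⟩ | ⟨y, hy, _, hyt, hyn⟩
    · simp at habs; omega
    · exact ⟨y, hy, hyt, fun h => hyn (by simp [h])⟩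
  obtain ⟨z, hzP, hzt, hz0⟩ := hA0
  obtain ⟨y, hyP, hyt, hyk⟩ := hBk
  rcases hv with ⟨i, rfl⟩ | ⟨i, rfl⟩ | rfl
  · -- v = a i
    by_cases hzv : z = i
    · subst hzv
      by_cases hio : z.1 = tt k - 1
      · -- the overlap connector case: cut argument
        by_contra hlt
        push_neg at hlt
        have hF : ↑(insert (Vtx.b y) base) ⊆ H.verts := by
          intro u hu
          simp only [Finset.coe_insert, Set.mem_insert_iff, Finset.mem_coe] at hu
          rcases hu with rfl | hu
          · exact hyP
          · exact hsub (by simpa using hu)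
        have hFcard : (insert (Vtx.b y) base).card = k + 1 := by
          rw [Finset.card_insert_of_notMem (by simp [hbase, mem_Dm]), hbcard]
        have hEq : ↑(insert (Vtx.b y) base) = H.verts := by
          apply Set.eq_of_subset_of_ncard_le hF
          rw [Set.ncard_coe_finset, hFcard]
          omega
        have hmem : ∀ x, x ∈ H.verts → x ∈ insert (Vtx.b y) base := by
          intro x hx; rw [← hEq] at hx; simpa using hx
        refine cutA hk H hc ?_ ?_ hzP hyP
        · intro w hw _
          have := hmem _ hw
          simp only [Finset.mem_insert, hbase, mem_Dm] at this
          rcases this with h | h | ⟨j, hj, _⟩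
          · exact absurd h (by simp)
          · rw [show w = z from by injection h]; exact hio
          · exact absurd hj (by simp)
        · intro hrP
          have := hmem _ hrP
          simp [hbase, mem_Dm] at this
      · -- find another a via the neighbour of d z
        rcases nbr z (by omega) with ⟨z₂, hz₂, _, hzt₂, hne₂⟩ | ⟨z₂, _, habs, _⟩
        · refine le_trans (le_of_eq (by omega : k + 2 = base.card + 2))
            (ncard_extras2 H.verts base hsub (.a z₂) (.b y) hz₂ hyP ?_ ?_ (by simp))
          · simp [hbase, mem_Dm, Fin.ext_iff]; omega
          · simp [hbase, mem_Dm]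
        · omega
    · -- a z is not v
      refine le_trans (le_of_eq (by omega : k + 2 = base.card + 2))
        (ncard_extras2 H.verts base hsub (.a z) (.b y) hzP hyP ?_ ?_ (by simp))
      · simp [hbase, mem_Dm]; exact fun h => hzv (by exact h)
      · simp [hbase, mem_Dm]
  · -- v = b i
    by_cases hyv : y = i
    · subst hyv
      by_cases hio : y.1 = tt k - 1
      · -- overlap connector on the b side: cut argument
        by_contra hlt
        push_neg at hlt
        have hF : ↑(insert (Vtx.a z) base) ⊆ H.verts := by
          intro u hu
          simp only [Finset.coe_insert, Set.mem_insert_iff, Finset.mem_coe] at hu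
          rcases hu with rfl | hu
          · exact hzP
          · exact hsub (by simpa using hu)
        have hFcard : (insert (Vtx.a z) base).card = k + 1 := by
          rw [Finset.card_insert_of_notMem (by simp [hbase, mem_Dm]), hbcard]
        have hEq : ↑(insert (Vtx.a z) base) = H.verts := by
          apply Set.eq_of_subset_of_ncard_le hF
          rw [Set.ncard_coe_finset, hFcard]
          omega
        have hmem : ∀ x, x ∈ H.verts → x ∈ insert (Vtx.a z) base := by
          intro x hx; rw [← hEq] at hx; simpa using hx
        refine cutB hk H hc ?_ ?_ hzP hyP
        · intro w hw _
          have := hmem _ hw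
          simp only [Finset.mem_insert, hbase, mem_Dm] at this
          rcases this with h | h | ⟨j, hj, _⟩
          · exact absurd h (by simp)
          · rw [show w = y from by injection h]; exact hio
          · exact absurd hj (by simp)
        · intro hrP
          have := hmem _ hrP
          simp [hbase, mem_Dm] at this
      · by_cases hik : y.1 = k - 1
        · -- v = b (k-1) : every vertex is forced, contradiction via d z
          by_contra hlt
          push_neg at hlt
          have hF : ↑(insert (Vtx.a z) base) ⊆ H.verts := by
            intro u hu
            simp only [Finset.coe_insert, Set.mem_insert_iff, Finset.mem_coe] at hu
            rcases hu with rfl | hu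
            · exact hzP
            · exact hsub (by simpa using hu)
          have hFcard : (insert (Vtx.a z) base).card = k + 1 := by
            rw [Finset.card_insert_of_notMem (by simp [hbase, mem_Dm]), hbcard]
          have hEq : ↑(insert (Vtx.a z) base) = H.verts := by
            apply Set.eq_of_subset_of_ncard_le hF
            rw [Set.ncard_coe_finset, hFcard]
            omega
          have hmem : ∀ x, x ∈ H.verts → x ∈ insert (Vtx.a z) base := by
            intro x hx; rw [← hEq] at hx; simpa using hx
          have hrP : Vtx.r ∉ H.verts := by
            intro hrP
            have := hmem _ hrP
            simp [hbase, mem_Dm] at this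
          by_cases hzo : z.1 = tt k - 1
          · refine cutA hk H hc ?_ hrP hzP hyP
            intro w hw _
            have := hmem _ hw
            simp only [Finset.mem_insert, hbase, mem_Dm] at this
            rcases this with h | h | ⟨j, hj, _⟩
            · rw [show w = z from by injection h]; exact hzo
            · exact absurd h (by simp)
            · exact absurd hj (by simp)
          · -- d z has no possible neighbour
            rcases nbr z (by omega) with ⟨z₂, hz₂, _, _, hne₂⟩ | ⟨z₂, _, habs, _⟩
            · have := hmem _ hz₂
              simp only [Finset.mem_insert, hbase, mem_Dm] at this
              rcases this with h | h | ⟨j, hj, _⟩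
              · exact hne₂ (by injection h with h'; rw [h'])
              · exact absurd h (by simp)
              · exact absurd hj (by simp)
            · omega
        · -- generic b: use the neighbour of d y
          rcases nbr y (by omega) with ⟨z₂, _, habs, _, _⟩ | ⟨y₂, hy₂, _, hyt₂, hne₂⟩
          · omega
          · refine le_trans (le_of_eq (by omega : k + 2 = base.card + 2))
              (ncard_extras2 H.verts base hsub (.a z) (.b y₂) hzP hy₂ ?_ ?_ (by simp))
            · simp [hbase, mem_Dm]
            · simp [hbase, mem_Dm, Fin.ext_iff]; omega
    · -- b y is not v
      refine le_trans (le_of_eq (by omega : k + 2 = base.card + 2))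
        (ncard_extras2 H.verts base hsub (.a z) (.b y) hzP hyP ?_ ?_ (by simp))
      · simp [hbase, mem_Dm]
      · simp [hbase, mem_Dm]; exact fun h => hyv (by exact h)
  · -- v = r
    refine le_trans (le_of_eq (by omega : k + 2 = base.card + 2))
      (ncard_extras2 H.verts base hsub (.a z) (.b y) hzP hyP ?_ ?_ (by simp))
    · simp [hbase, mem_Dm]
    · simp [hbase, mem_Dm]



-- ===== assembly =====

lemma steiner_set_nonempty (hk : 5 ≤ k) (S : Set (Vtx k)) :
    {n | ∃ H : (Gk k).Subgraph, H.Connected ∧ S ⊆ H.verts ∧ H.edgeSet.ncard = n}.Nonempty := by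
  have hcond : ∀ v ∈ (Finset.univ : Finset (Vtx k)), v ≠ .r →
      pUB k (oI k hk) (oI k hk) (lI k hk) v ∈ Finset.univ ∧
      (Gk k).Adj v (pUB k (oI k hk) (oI k hk) (lI k hk) v) := by
    intro v _ hv
    exact ⟨Finset.mem_univ _, (pUB_cond hk v hv).1⟩
  refine ⟨_, treeSub (Gk k) Finset.univ _ Vtx.r hcond,
    treeSub_connected (Gk k) Finset.univ _ Vtx.r rk (Finset.mem_univ _) hcond
      (fun v _ hv => (pUB_cond hk v hv).2), ?_, rfl⟩
  intro x _
  simp [treeSub]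

lemma steiner_ge (hk : 5 ≤ k) (S : Set (Vtx k)) (N : ℕ)
    (hbound : ∀ H : (Gk k).Subgraph, H.Connected → S ⊆ H.verts → N + 1 ≤ H.verts.ncard) :
    N ≤ steinerDist (Gk k) S := by
  obtain ⟨H, hc, hsv, he⟩ := Nat.sInf_mem (steiner_set_nonempty hk S)
  have h1 := subgraph_verts_le H hc
  have h2 := hbound H hc hsv
  rw [steinerDist]
  omega

/-- the Steiner distance of the full terminal set is exactly `k + 3` -/
lemma dist_DD (hk : 5 ≤ k) : steinerDist (Gk k) ↑(DD k) = k + 3 := by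
  refine le_antisymm ?_ ?_
  · have := steiner_le_card_add_three hk (DD k)
    rwa [DD_card] at this
  · exact steiner_ge hk _ _ (fun H hc hs => DD_lower hk H hc hs)

lemma Sv_card (hk : 5 ≤ k) (v : Vtx k) (hv : (∃ i, v = Vtx.a i) ∨ (∃ i, v = Vtx.b i) ∨ v = .r) :
    (insert v (Dm k hk)).card = k := by
  have hvnot : v ∉ Dm k hk := by
    rcases hv with ⟨i, rfl⟩ | ⟨i, rfl⟩ | rfl <;> simp [mem_Dm]
  rw [Finset.card_insert_of_notMem hvnot, Dm_card hk]
  omega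

lemma dist_Sv_ge (hk : 5 ≤ k) (v : Vtx k)
    (hv : (∃ i, v = Vtx.a i) ∨ (∃ i, v = Vtx.b i) ∨ v = .r) :
    k + 1 ≤ steinerDist (Gk k) ↑(insert v (Dm k hk)) := by
  exact steiner_ge hk _ _ (fun H hc hs => Sv_lower hk v hv H hc hs)

section ecc
variable (hk : 5 ≤ k)
include hk

lemma ecc_mem_le (n : ℕ) (v : Vtx k)
    (hn : n ∈ {n | ∃ S : Finset (Vtx k), v ∈ S ∧ S.card = k ∧
      steinerDist (Gk k) (S : Set (Vtx k)) = n}) : n ≤ k + 3 := by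
  obtain ⟨S, _, hcard, rfl⟩ := hn
  have := steiner_le_card_add_three hk S
  omega

lemma ecc_bddAbove (v : Vtx k) : BddAbove {n | ∃ S : Finset (Vtx k), v ∈ S ∧ S.card = k ∧
    steinerDist (Gk k) (S : Set (Vtx k)) = n} :=
  ⟨k + 3, fun n hn => ecc_mem_le hk n v hn⟩

lemma ecc_le (v : Vtx k) : steinerEcc (Gk k) k v ≤ k + 3 :=
  csSup_le' (fun n hn => ecc_mem_le hk n v hn)

lemma ecc_ge_of (v : Vtx k) (S : Finset (Vtx k)) (hvS : v ∈ S) (hcard : S.card = k)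
    (m : ℕ) (hm : m ≤ steinerDist (Gk k) (S : Set (Vtx k))) : m ≤ steinerEcc (Gk k) k v :=
  le_trans hm (le_csSup (ecc_bddAbove hk v) ⟨S, hvS, hcard, rfl⟩)

lemma ecc_r : steinerEcc (Gk k) k Vtx.r = k + 1 := by
  refine le_antisymm ?_ ?_
  · refine csSup_le' ?_
    rintro n ⟨S, hrS, hcard, rfl⟩
    exact steiner_le_with_r hk S hrS hcard
  · refine ecc_ge_of hk _ (insert Vtx.r (Dm k hk)) (Finset.mem_insert_self _ _)
      (Sv_card hk _ (Or.inr (Or.inr rfl))) _ ?_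
    exact dist_Sv_ge hk _ (Or.inr (Or.inr rfl))

lemma ecc_ge_all (v : Vtx k) : k + 1 ≤ steinerEcc (Gk k) k v := by
  cases v with
  | d i =>
    refine ecc_ge_of hk _ (DD k) (by simp [mem_DD]) DD_card _ ?_
    rw [dist_DD hk]; omega
  | a i =>
    refine ecc_ge_of hk _ (insert (Vtx.a i) (Dm k hk)) (Finset.mem_insert_self _ _)
      (Sv_card hk _ (Or.inl ⟨i, rfl⟩)) _ ?_
    exact dist_Sv_ge hk _ (Or.inl ⟨i, rfl⟩)
  | b i =>
    refine ecc_ge_of hk _ (insert (Vtx.b i) (Dm k hk)) (Finset.mem_insert_self _ _)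
      (Sv_card hk _ (Or.inr (Or.inl ⟨i, rfl⟩))) _ ?_
    exact dist_Sv_ge hk _ (Or.inr (Or.inl ⟨i, rfl⟩))
  | r => rw [ecc_r hk]

lemma ecc_d0 : steinerEcc (Gk k) k (Vtx.d ⟨0, by omega⟩) = k + 3 := by
  refine le_antisymm (ecc_le hk _) ?_
  refine ecc_ge_of hk _ (DD k) (by simp [mem_DD]) DD_card _ ?_
  rw [dist_DD hk]

lemma srad_eq : srad (Gk k) k = k + 1 := by
  rw [srad]
  refine le_antisymm ?_ ?_
  · refine le_trans (csInf_le (OrderBot.bddBelow _) ⟨Vtx.r, rfl⟩) ?_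
    rw [ecc_r hk]
  · exact le_csInf ⟨_, ⟨Vtx.r, rfl⟩⟩ (by rintro n ⟨v, rfl⟩; exact ecc_ge_all hk v)

lemma sdiam_eq : sdiam (Gk k) k = k + 3 := by
  rw [sdiam]
  refine le_antisymm ?_ ?_
  · exact csSup_le' (by rintro n ⟨v, rfl⟩; exact ecc_le hk v)
  · refine le_csSup ⟨k + 3, by rintro n ⟨v, rfl⟩; exact ecc_le hk v⟩ ?_
    exact ⟨Vtx.d ⟨0, by omega⟩, ecc_d0 hk⟩

end ecc

end SharpAux

end

theorem sharpness {k : ℕ} (hk : 5 ≤ k) :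
    ∃ (V : Type) (inst : Fintype V) (G : SimpleGraph V),
      G.Connected ∧ @sdiam V inst G k = k + 3 ∧ @srad V inst G k = k + 1 := by
  classical
  exact ⟨SharpAux.Vtx k, inferInstance, SharpAux.Gk k, SharpAux.Gk_connected hk,
    SharpAux.sdiam_eq hk, SharpAux.srad_eq hk⟩
end

section
/- In the graph G_k (k ≥ 5), the Steiner k-eccentricity of the vertex r equals k+1. -/
/-- `m = ⌈(k+1)/2⌉`. -/
def mval (k : ℕ) : ℕ := (k + 2) / 2

/-- Vertex type of the graph `G_k`: the `d`-vertices (`Sum.inl i` is `d_{i+1}`),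
the `a`-vertices (indexed by indices in `D₁`), the `b`-vertices (indexed by indices
in `D₂`), and the extra vertex `r`. -/
abbrev Vk (k : ℕ) :=
  Fin k ⊕ ({i : Fin k // (i : ℕ) < mval k} ⊕ ({i : Fin k // mval k ≤ (i : ℕ) + 1} ⊕ Unit))

/-- The graph `G_k`: each `a_i` is adjacent to all of `D₁ \ {d_i}`, each `b_j` is
adjacent to all of `D₂ \ {d_j}`, and `r` is adjacent to every `a_i` and `b_j`. -/
def Gk (k : ℕ) : SimpleGraph (Vk k) :=
  SimpleGraph.fromRel (fun x y =>
    match x, y with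
    | Sum.inl d, Sum.inr (Sum.inl a) => (d : ℕ) < mval k ∧ d ≠ a.1
    | Sum.inl d, Sum.inr (Sum.inr (Sum.inl b)) => mval k ≤ (d : ℕ) + 1 ∧ d ≠ b.1
    | Sum.inr (Sum.inl _), Sum.inr (Sum.inr (Sum.inr _)) => True
    | Sum.inr (Sum.inr (Sum.inl _)), Sum.inr (Sum.inr (Sum.inr _)) => True
    | _, _ => False)

/-- The vertex `r` of `G_k`. -/
def rVert (k : ℕ) : Vk k := Sum.inr (Sum.inr (Sum.inr ()))

/- ### Auxiliary material -/

open SimpleGraph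

/-- In a connected subgraph, every non-basepoint vertex has a neighbor that is strictly
closer to the basepoint. -/
lemma SteinerAux.exists_closer {V : Type*} {G : SimpleGraph V} (H : G.Subgraph)
    (hc : H.Connected) {v r : V} (hv : v ∈ H.verts) (hr : r ∈ H.verts) (hne : v ≠ r) :
    ∃ w : H.verts, H.Adj v w.1 ∧
      H.coe.dist w ⟨r, hr⟩ < H.coe.dist ⟨v, hv⟩ ⟨r, hr⟩ := by
  have hreach : H.coe.Reachable ⟨v, hv⟩ ⟨r, hr⟩ := hc.coe ⟨v, hv⟩ ⟨r, hr⟩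
  obtain ⟨p, hp⟩ := hreach.exists_walk_length_eq_dist
  cases p with
  | nil => exact absurd rfl hne
  | cons ha q =>
    rename_i u
    refine ⟨u, ha, ?_⟩
    have h1 : H.coe.dist u ⟨r, hr⟩ ≤ q.length := SimpleGraph.dist_le q
    simp [SimpleGraph.Walk.length_cons] at hp
    omega

/-- A connected subgraph has at least `|verts| - 1` edges. -/
lemma SteinerAux.verts_le_edges {V : Type*} [Fintype V] {G : SimpleGraph V} (H : G.Subgraph)
    (hc : H.Connected) : H.verts.ncard ≤ H.edgeSet.ncard + 1 := by
  classical
  obtain ⟨r, hr⟩ := hc.nonempty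
  set D : V → ℕ := fun v => if h : v ∈ H.verts then H.coe.dist ⟨v, h⟩ ⟨r, hr⟩ else 0 with hD
  have key : ∀ v, v ∈ H.verts → v ≠ r → ∃ w, H.Adj v w ∧ D w < D v := by
    intro v hv hne
    obtain ⟨w, hadj, hlt⟩ := SteinerAux.exists_closer H hc hv hr hne
    refine ⟨w.1, hadj, ?_⟩
    have e1 : D w.1 = H.coe.dist w ⟨r, hr⟩ := by
      rw [hD]; dsimp only; rw [dif_pos w.2]
    have e2 : D v = H.coe.dist ⟨v, hv⟩ ⟨r, hr⟩ := by
      rw [hD]; dsimp only; rw [dif_pos hv]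
    rw [e1, e2]; exact hlt
  choose nxt hadj hdist using key
  set f : V → Sym2 V := fun v =>
    if h : v ∈ H.verts ∧ v ≠ r then s(v, nxt v h.1 h.2) else s(v, v) with hf
  have hmaps : ∀ v ∈ H.verts \ {r}, f v ∈ H.edgeSet := by
    intro v hv
    obtain ⟨hv1, hv2⟩ := hv
    have h : v ∈ H.verts ∧ v ≠ r := ⟨hv1, hv2⟩
    simp only [hf, dif_pos h]
    exact SimpleGraph.Subgraph.mem_edgeSet.mpr (hadj v h.1 h.2)
  have hinj : Set.InjOn f (H.verts \ {r}) := by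
    intro v hv w hw heq
    obtain ⟨hv1, hv2⟩ := hv
    obtain ⟨hw1, hw2⟩ := hw
    have h1 : v ∈ H.verts ∧ v ≠ r := ⟨hv1, hv2⟩
    have h2 : w ∈ H.verts ∧ w ≠ r := ⟨hw1, hw2⟩
    simp only [hf, dif_pos h1, dif_pos h2] at heq
    rw [Sym2.eq_iff] at heq
    rcases heq with ⟨h3, h4⟩ | ⟨h3, h4⟩
    · exact h3
    · exfalso
      have d1 := hdist v h1.1 h1.2
      have d2 := hdist w h2.1 h2.2
      rw [h4] at d1
      rw [← h3] at d2
      omega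
  have h1 : (H.verts \ {r}).ncard = (f '' (H.verts \ {r})).ncard :=
    (Set.ncard_image_of_injOn hinj).symm
  have h2 : (f '' (H.verts \ {r})).ncard ≤ H.edgeSet.ncard := by
    apply Set.ncard_le_ncard _ (Set.toFinite _)
    rintro e ⟨v, hv, rfl⟩
    exact hmaps v hv
  have h3 : H.verts.ncard ≤ (H.verts \ {r}).ncard + 1 := by
    rw [Set.ncard_diff_singleton_of_mem hr]
    have := Set.ncard_pos (s := H.verts) (Set.toFinite _) |>.mpr ⟨r, hr⟩
    omega
  omega

/-- The `a`- and `b`- vertices of `G_k`. -/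
def SteinerAux.isAB {k : ℕ} : Vk k → Prop := fun x =>
  match x with
  | Sum.inr (Sum.inl _) => True
  | Sum.inr (Sum.inr (Sum.inl _)) => True
  | _ => False

namespace SteinerAux

lemma adj_ra {k : ℕ} (x : Vk k) (hx : isAB x) : (Gk k).Adj (rVert k) x := by
  rcases x with d | a | b | u
  · exact absurd hx (by simp [isAB])
  · simp [Gk, rVert, SimpleGraph.fromRel_adj]
  · simp [Gk, rVert, SimpleGraph.fromRel_adj]
  · exact absurd hx (by simp [isAB])

lemma adj_to_ab {k : ℕ} {x y : Vk k} (h : (Gk k).Adj x y) (hx : ¬ isAB x) : isAB y := by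
  rcases x with d | a | b | u <;> rcases y with d' | a' | b' | u' <;>
    simp_all [Gk, isAB, SimpleGraph.fromRel_adj]

lemma adj_da_iff {k : ℕ} {i : Fin k} {a : {i : Fin k // (i : ℕ) < mval k}} :
    (Gk k).Adj (Sum.inl i) (Sum.inr (Sum.inl a)) ↔ (i : ℕ) < mval k ∧ i ≠ a.1 := by
  simp [Gk, SimpleGraph.fromRel_adj]

lemma adj_db_iff {k : ℕ} {i : Fin k} {b : {i : Fin k // mval k ≤ (i : ℕ) + 1}} :
    (Gk k).Adj (Sum.inl i) (Sum.inr (Sum.inr (Sum.inl b))) ↔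
      mval k ≤ (i : ℕ) + 1 ∧ i ≠ b.1 := by
  simp [Gk, SimpleGraph.fromRel_adj]

/-- The key construction: a connected subgraph with at most `k + 1` edges containing `S`. -/
lemma build {k : ℕ} (S : Finset (Vk k)) (hrS : rVert k ∈ S) (hScard : S.card = k)
    (A B : Finset (Fin k)) (hA hB : Fin k)
    (hhA : (hA : ℕ) < mval k) (hhB : mval k ≤ (hB : ℕ) + 1)
    (hAm : ∀ i ∈ A, (i : ℕ) < mval k) (hBm : ∀ i ∈ B, mval k ≤ (i : ℕ) + 1)
    (hAnot : hA ∉ A) (hBnot : hB ∉ B)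
    (hAS : ∀ i ∈ A, Sum.inl i ∈ S) (hBS : ∀ i ∈ B, Sum.inl i ∈ S)
    (hdisj : Disjoint A B)
    (hcover : ∀ i : Fin k, Sum.inl i ∈ S → i ∈ A ∪ B) :
    ∃ H : (Gk k).Subgraph, H.Connected ∧ ↑S ⊆ H.verts ∧ H.edgeSet.ncard ≤ k + 1 := by
  classical
  set aH : Vk k := Sum.inr (Sum.inl ⟨hA, hhA⟩) with haH
  set bH : Vk k := Sum.inr (Sum.inr (Sum.inl ⟨hB, hhB⟩)) with hbH
  set W : Set (Vk k) := ↑S ∪ {aH, bH} with hW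
  set H : (Gk k).Subgraph :=
    { verts := W
      Adj := fun x y =>
        (x = rVert k ∧ y ∈ W ∧ isAB y) ∨ (y = rVert k ∧ x ∈ W ∧ isAB x) ∨
        (x = aH ∧ ∃ i ∈ A, y = Sum.inl i) ∨ (y = aH ∧ ∃ i ∈ A, x = Sum.inl i) ∨
        (x = bH ∧ ∃ i ∈ B, y = Sum.inl i) ∨ (y = bH ∧ ∃ i ∈ B, x = Sum.inl i)
      adj_sub := by
        rintro v w (⟨rfl, hw, hab⟩ | ⟨rfl, hv, hab⟩ |
          ⟨rfl, i, hi, rfl⟩ | ⟨rfl, i, hi, rfl⟩ | ⟨rfl, i, hi, rfl⟩ | ⟨rfl, i, hi, rfl⟩)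
        · exact adj_ra _ hab
        · exact (adj_ra _ hab).symm
        · exact (adj_da_iff.mpr ⟨hAm i hi,
            fun h => hAnot (by rw [show i = hA from h] at hi; exact hi)⟩).symm
        · exact adj_da_iff.mpr ⟨hAm i hi,
            fun h => hAnot (by rw [show i = hA from h] at hi; exact hi)⟩
        · exact (adj_db_iff.mpr ⟨hBm i hi,
            fun h => hBnot (by rw [show i = hB from h] at hi; exact hi)⟩).symm
        · exact adj_db_iff.mpr ⟨hBm i hi,
            fun h => hBnot (by rw [show i = hB from h] at hi; exact hi)⟩
      edge_vert := by
        rintro v w (⟨rfl, hw, hab⟩ | ⟨rfl, hv, hab⟩ |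
          ⟨rfl, i, hi, rfl⟩ | ⟨rfl, i, hi, rfl⟩ | ⟨rfl, i, hi, rfl⟩ | ⟨rfl, i, hi, rfl⟩)
        · exact Or.inl hrS
        · exact hv
        · exact Or.inr (Or.inl rfl)
        · exact Or.inl (hAS i hi)
        · exact Or.inr (Or.inr rfl)
        · exact Or.inl (hBS i hi)
      symm := by
        constructor
        rintro v w (h | h | h | h | h | h)
        · exact Or.inr (Or.inl h)
        · exact Or.inl h
        · exact Or.inr (Or.inr (Or.inr (Or.inl h)))
        · exact Or.inr (Or.inr (Or.inl h))
        · exact Or.inr (Or.inr (Or.inr (Or.inr (Or.inr h))))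
        · exact Or.inr (Or.inr (Or.inr (Or.inr (Or.inl h)))) } with hH
  have hrW : rVert k ∈ W := Or.inl hrS
  have haW : aH ∈ W := Or.inr (Or.inl rfl)
  have hbW : bH ∈ W := Or.inr (Or.inr rfl)
  have habA : isAB aH := by simp [haH, isAB]
  have habB : isAB bH := by simp [hbH, isAB]
  have hconn : H.Connected := by
    rw [SimpleGraph.Subgraph.connected_iff]
    refine ⟨⟨?_⟩, ⟨rVert k, hrW⟩⟩
    have key : ∀ v : H.verts, H.coe.Reachable v ⟨rVert k, hrW⟩ := by
      rintro ⟨v, hv⟩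
      have reach_of_adj : ∀ (x : Vk k) (hx : x ∈ H.verts), H.Adj (rVert k) x →
          H.coe.Reachable ⟨x, hx⟩ ⟨rVert k, hrW⟩ := fun x hx h =>
        (SimpleGraph.Subgraph.Adj.coe h).reachable.symm
      rcases v with i | a | b | u
      · have hiS : Sum.inl i ∈ S := by
          rcases hv with h | h
          · exact h
          · rcases h with h | h <;> simp [haH, hbH] at h
        rcases Finset.mem_union.mp (hcover i hiS) with hi | hi
        · have h1 : H.Adj aH (Sum.inl i) := Or.inr (Or.inr (Or.inl ⟨rfl, i, hi, rfl⟩))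
          have h2 : H.Adj (rVert k) aH := Or.inl ⟨rfl, haW, habA⟩
          exact ((SimpleGraph.Subgraph.Adj.coe h1).symm.reachable.trans
            (reach_of_adj aH haW h2))
        · have h1 : H.Adj bH (Sum.inl i) :=
            Or.inr (Or.inr (Or.inr (Or.inr (Or.inl ⟨rfl, i, hi, rfl⟩))))
          have h2 : H.Adj (rVert k) bH := Or.inl ⟨rfl, hbW, habB⟩
          exact ((SimpleGraph.Subgraph.Adj.coe h1).symm.reachable.trans
            (reach_of_adj bH hbW h2))
      · exact reach_of_adj _ hv (Or.inl ⟨rfl, hv, trivial⟩)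
      · exact reach_of_adj _ hv (Or.inl ⟨rfl, hv, trivial⟩)
      · exact Reachable.refl _
    intro u v
    exact (key u).trans (key v).symm
  set P : Finset (Vk k) := S.filter (fun x => isAB x) with hP
  set E : Finset (Sym2 (Vk k)) :=
    ((P ∪ {aH, bH}).image (fun x => s(rVert k, x))) ∪
      (A.image (fun i => s(aH, Sum.inl i))) ∪ (B.image (fun i => s(bH, Sum.inl i))) with hE
  have hsub : H.edgeSet ⊆ ↑E := by
    intro e he
    induction e with
    | h v w =>
      rw [SimpleGraph.Subgraph.mem_edgeSet] at he
      simp only [hE, Finset.coe_union, Set.mem_union, Finset.coe_image, Set.mem_image,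
        Finset.mem_coe]
      rcases he with ⟨rfl, hw, hab⟩ | ⟨rfl, hv, hab⟩ |
          ⟨rfl, i, hi, rfl⟩ | ⟨rfl, i, hi, rfl⟩ | ⟨rfl, i, hi, rfl⟩ | ⟨rfl, i, hi, rfl⟩
      · refine Or.inl (Or.inl ⟨w, ?_, rfl⟩)
        rcases hw with h | h
        · exact Or.inl (Finset.mem_filter.mpr ⟨h, hab⟩)
        · have h2 : w = aH ∨ w = bH := by simpa [Set.mem_insert_iff] using h
          refine Or.inr ?_
          rcases h2 with rfl | rfl <;> simp
      · refine Or.inl (Or.inl ⟨v, ?_, Sym2.eq_swap⟩)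
        rcases hv with h | h
        · exact Or.inl (Finset.mem_filter.mpr ⟨h, hab⟩)
        · have h2 : v = aH ∨ v = bH := by simpa [Set.mem_insert_iff] using h
          refine Or.inr ?_
          rcases h2 with rfl | rfl <;> simp
      · exact Or.inl (Or.inr ⟨i, hi, rfl⟩)
      · exact Or.inl (Or.inr ⟨i, hi, Sym2.eq_swap⟩)
      · exact Or.inr ⟨i, hi, rfl⟩
      · exact Or.inr ⟨i, hi, Sym2.eq_swap⟩
  have hcount : (E : Set (Sym2 (Vk k))).ncard ≤ k + 1 := by
    rw [Set.ncard_coe_finset]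
    have e1 : E.card ≤ (P ∪ {aH, bH}).card + A.card + B.card := by
      calc E.card ≤ ((P ∪ {aH, bH}).image (fun x => s(rVert k, x)) ∪
            A.image (fun i => s(aH, Sum.inl i))).card +
              (B.image (fun i => s(bH, Sum.inl i))).card :=
          Finset.card_union_le _ _
        _ ≤ ((P ∪ {aH, bH}).image (fun x => s(rVert k, x))).card +
            (A.image (fun i => s(aH, Sum.inl i))).card +
              (B.image (fun i => s(bH, Sum.inl i))).card := by
          have := Finset.card_union_le ((P ∪ {aH, bH}).image (fun x => s(rVert k, x)))
            (A.image (fun i => s(aH, Sum.inl i)))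
          omega
        _ ≤ (P ∪ {aH, bH}).card + A.card + B.card := by
          have h1 := Finset.card_image_le (s := P ∪ {aH, bH}) (f := fun x => s(rVert k, x))
          have h2 := Finset.card_image_le (s := A) (f := fun i => s(aH, Sum.inl i))
          have h3 := Finset.card_image_le (s := B) (f := fun i => s(bH, Sum.inl i))
          omega
    have e2 : (P ∪ {aH, bH}).card ≤ P.card + 2 := by
      have := Finset.card_union_le P ({aH, bH} : Finset (Vk k))
      have h2 : ({aH, bH} : Finset (Vk k)).card ≤ 2 :=
        Finset.card_insert_le _ _ |>.trans (by simp)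
      omega
    have e3 : P.card + A.card + B.card ≤ k - 1 := by
      have hdisjS : Disjoint P (A.image Sum.inl ∪ B.image Sum.inl) := by
        rw [Finset.disjoint_left]
        intro x hx hx2
        have := (Finset.mem_filter.mp hx).2
        rcases Finset.mem_union.mp hx2 with h | h <;>
          · obtain ⟨i, _, rfl⟩ := Finset.mem_image.mp h
            simp [isAB] at this
      have hdisjAB : Disjoint (A.image Sum.inl) ((B.image Sum.inl) : Finset (Vk k)) := by
        rw [Finset.disjoint_left]
        rintro x hx hx2
        obtain ⟨i, hi, rfl⟩ := Finset.mem_image.mp hx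
        obtain ⟨j, hj, hji⟩ := Finset.mem_image.mp hx2
        obtain rfl : j = i := by simpa using hji
        exact Finset.disjoint_left.mp hdisj hi hj
      have hsubS : P ∪ (A.image Sum.inl ∪ B.image Sum.inl) ⊆ S.erase (rVert k) := by
        intro x hx
        rcases Finset.mem_union.mp hx with h | h
        · have h1 := Finset.mem_filter.mp h
          refine Finset.mem_erase.mpr ⟨?_, h1.1⟩
          rintro rfl; simp [isAB, rVert] at h1
        · rcases Finset.mem_union.mp h with h | h <;>
            · obtain ⟨i, hi, rfl⟩ := Finset.mem_image.mp h
              refine Finset.mem_erase.mpr ⟨by simp [rVert], ?_⟩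
              first | exact hAS i hi | exact hBS i hi
      have c1 : (P ∪ (A.image Sum.inl ∪ B.image Sum.inl)).card =
          P.card + (A.card + B.card) := by
        rw [Finset.card_union_of_disjoint hdisjS, Finset.card_union_of_disjoint hdisjAB,
          Finset.card_image_of_injective _ Sum.inl_injective,
          Finset.card_image_of_injective _ Sum.inl_injective]
      have c2 := Finset.card_le_card hsubS
      rw [Finset.card_erase_of_mem hrS, hScard] at c2
      omega
    have hk1 : 1 ≤ k := by
      have : 0 < S.card := Finset.card_pos.mpr ⟨_, hrS⟩
      omega
    omega
  refine ⟨H, hconn, ?_, le_trans (Set.ncard_le_ncard hsub (Set.toFinite _)) hcount⟩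
  intro x hx
  exact Or.inl hx

/-- For every `k`-set `S` containing `r` there is a connected subgraph containing `S`
with at most `k + 1` edges. -/
lemma exists_small {k : ℕ} (hk : 5 ≤ k) (S : Finset (Vk k)) (hrS : rVert k ∈ S)
    (hScard : S.card = k) :
    ∃ H : (Gk k).Subgraph, H.Connected ∧ ↑S ⊆ H.verts ∧ H.edgeSet.ncard ≤ k + 1 := by
  classical
  have hm : 3 ≤ mval k ∧ mval k + 2 ≤ k := by simp only [mval]; omega
  set DS : Finset (Fin k) := Finset.univ.filter (fun i => Sum.inl i ∈ S) with hDS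
  have hDSmem : ∀ i : Fin k, i ∈ DS ↔ Sum.inl i ∈ S := by
    intro i; simp [hDS]
  have hDScard : DS.card ≤ k - 1 := by
    have hsub2 : DS.image Sum.inl ⊆ S.erase (rVert k) := by
      intro x hx
      obtain ⟨i, hi, rfl⟩ := Finset.mem_image.mp hx
      exact Finset.mem_erase.mpr ⟨by simp [rVert], (hDSmem i).mp hi⟩
    have := Finset.card_le_card hsub2
    rw [Finset.card_image_of_injective _ Sum.inl_injective,
      Finset.card_erase_of_mem hrS, hScard] at this
    exact this
  by_cases hfull : ∀ i : Fin k, mval k ≤ (i : ℕ) + 1 → i ∈ DS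
  · -- the `D₂` side is fully in `S`; put `d_m` on the `a` side
    have hexj : ∃ j : Fin k, j ∉ DS := by
      by_contra h
      push_neg at h
      have : DS = Finset.univ := Finset.eq_univ_iff_forall.mpr h
      rw [this, Finset.card_univ, Fintype.card_fin] at hDScard
      omega
    obtain ⟨j, hj⟩ := hexj
    have hjm : (j : ℕ) + 1 < mval k := by
      by_contra h
      exact hj (hfull j (by omega))
    refine build S hrS hScard
      (DS.filter (fun i => (i : ℕ) < mval k)) (DS.filter (fun i => mval k ≤ (i : ℕ)))
      j ⟨mval k - 1, by omega⟩ (by omega) (by simp; omega)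
      (fun i hi => (Finset.mem_filter.mp hi).2) (fun i hi => by
        have := (Finset.mem_filter.mp hi).2; omega)
      (fun h => hj (Finset.mem_filter.mp h).1)
      (fun h => by
        have := (Finset.mem_filter.mp h).2
        simp at this; omega)
      (fun i hi => (hDSmem i).mp (Finset.mem_filter.mp hi).1)
      (fun i hi => (hDSmem i).mp (Finset.mem_filter.mp hi).1)
      (by
        rw [Finset.disjoint_left]
        intro i h1 h2
        have := (Finset.mem_filter.mp h1).2
        have := (Finset.mem_filter.mp h2).2
        omega)
      (fun i hiS => by
        have hi : i ∈ DS := (hDSmem i).mpr hiS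
        rcases lt_or_ge (i : ℕ) (mval k) with h | h
        · exact Finset.mem_union_left _ (Finset.mem_filter.mpr ⟨hi, h⟩)
        · exact Finset.mem_union_right _ (Finset.mem_filter.mpr ⟨hi, h⟩))
  · -- some `d_j` with `j` on the `b` side is missing from `S`
    push_neg at hfull
    obtain ⟨j, hjm, hj⟩ := hfull
    refine build S hrS hScard
      (DS.filter (fun i => (i : ℕ) + 1 < mval k)) (DS.filter (fun i => mval k ≤ (i : ℕ) + 1))
      ⟨mval k - 1, by omega⟩ j (by simp; omega) hjm
      (fun i hi => by have := (Finset.mem_filter.mp hi).2; omega)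
      (fun i hi => (Finset.mem_filter.mp hi).2)
      (fun h => by
        have := (Finset.mem_filter.mp h).2
        simp at this; omega)
      (fun h => hj (Finset.mem_filter.mp h).1)
      (fun i hi => (hDSmem i).mp (Finset.mem_filter.mp hi).1)
      (fun i hi => (hDSmem i).mp (Finset.mem_filter.mp hi).1)
      (by
        rw [Finset.disjoint_left]
        intro i h1 h2
        have := (Finset.mem_filter.mp h1).2
        have := (Finset.mem_filter.mp h2).2
        omega)
      (fun i hiS => by
        have hi : i ∈ DS := (hDSmem i).mpr hiS
        rcases lt_or_ge ((i : ℕ) + 1) (mval k) with h | h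
        · exact Finset.mem_union_left _ (Finset.mem_filter.mpr ⟨hi, h⟩)
        · exact Finset.mem_union_right _ (Finset.mem_filter.mpr ⟨hi, h⟩))

end SteinerAux

namespace SteinerAux

/-- The witness set `S₀ = {r, d_1, …, d_{k-1}}`. -/
noncomputable def S0 (k : ℕ) : Finset (Vk k) :=
  insert (rVert k) ((Finset.univ.filter (fun i : Fin k => (i : ℕ) < k - 1)).image Sum.inl)

lemma r_mem_S0 (k : ℕ) : rVert k ∈ S0 k := Finset.mem_insert_self _ _

lemma mem_S0 {k : ℕ} {x : Vk k} :
    x ∈ S0 k ↔ x = rVert k ∨ ∃ i : Fin k, (i : ℕ) < k - 1 ∧ x = Sum.inl i := by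
  simp only [S0, Finset.mem_insert, Finset.mem_image, Finset.mem_filter, Finset.mem_univ,
    true_and]
  constructor
  · rintro (h | ⟨i, hi, rfl⟩)
    · exact Or.inl h
    · exact Or.inr ⟨i, hi, rfl⟩
  · rintro (h | ⟨i, hi, rfl⟩)
    · exact Or.inl h
    · exact Or.inr ⟨i, hi, rfl⟩

lemma card_S0 {k : ℕ} (hk : 5 ≤ k) : (S0 k).card = k := by
  classical
  have hfc : ((Finset.univ.filter (fun i : Fin k => (i : ℕ) < k - 1)).card = k - 1) := by
    have h : ((Finset.univ.filter (fun i : Fin k => (i : ℕ) < k - 1)).image Fin.val)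
        = Finset.range (k - 1) := by
      ext n
      simp only [Finset.mem_image, Finset.mem_filter, Finset.mem_univ, true_and,
        Finset.mem_range]
      constructor
      · rintro ⟨i, hi, rfl⟩; exact hi
      · intro hn; exact ⟨⟨n, by omega⟩, hn, rfl⟩
    have := Finset.card_image_of_injective
      (Finset.univ.filter (fun i : Fin k => (i : ℕ) < k - 1)) (Fin.val_injective)
    rw [h, Finset.card_range] at this
    omega
  rw [S0, Finset.card_insert_of_notMem (by simp [rVert]),
    Finset.card_image_of_injective _ Sum.inl_injective, hfc]
  omega

/-- The lower bound: every connected subgraph containing `S₀` has at least `k + 1` edges. -/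
lemma lower_bound {k : ℕ} (hk : 5 ≤ k) (H : (Gk k).Subgraph) (hc : H.Connected)
    (hsub : ↑(S0 k) ⊆ H.verts) : k + 1 ≤ H.edgeSet.ncard := by
  classical
  by_contra hlt
  push_neg at hlt
  have hedges : H.edgeSet.ncard ≤ k := by omega
  have hm : 3 ≤ mval k ∧ mval k + 2 ≤ k := by simp only [mval]; omega
  have hverts : H.verts.ncard ≤ k + 1 := le_trans (verts_le_edges H hc) (by omega)
  have hS0card : (↑(S0 k) : Set (Vk k)).ncard = k := by
    rw [Set.ncard_coe_finset, card_S0 hk]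
  have hdiff : (H.verts \ ↑(S0 k)).ncard ≤ 1 := by
    have := Set.ncard_diff hsub (Set.toFinite _)
    omega
  have hr : rVert k ∈ H.verts := hsub (by exact_mod_cast r_mem_S0 k)
  have hd0 : (Sum.inl (⟨0, by omega⟩ : Fin k) : Vk k) ∈ H.verts :=
    hsub (by exact_mod_cast mem_S0.mpr (Or.inr ⟨⟨0, by omega⟩, by simp; omega, rfl⟩))
  -- r has a neighbor x, which must be an a/b vertex outside S₀
  obtain ⟨w, hadj, -⟩ := exists_closer H hc hr hd0 (by simp [rVert])
  set x := w.1 with hx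
  have hxab : isAB x := adj_to_ab (H.adj_sub hadj) (by simp [rVert, isAB])
  have hxv : x ∈ H.verts := w.2
  have hxS0 : x ∉ (↑(S0 k) : Set (Vk k)) := by
    intro hmem
    rcases mem_S0.mp (by exact_mod_cast hmem) with h | ⟨i, hi, h⟩ <;>
      rw [h] at hxab <;> simp [isAB, rVert] at hxab
  have hxd : x ∈ H.verts \ ↑(S0 k) := ⟨hxv, hxS0⟩
  -- it is the unique extra vertex
  have huniq : ∀ y ∈ H.verts \ (↑(S0 k) : Set (Vk k)), y = x := by
    intro y hy
    by_contra hne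
    have hp : ({x, y} : Set (Vk k)) ⊆ H.verts \ ↑(S0 k) := by
      intro z hz
      rcases hz with rfl | rfl
      · exact hxd
      · exact hy
    have := Set.ncard_le_ncard hp (Set.toFinite _)
    rw [Set.ncard_pair (fun h => hne h.symm)] at this
    omega
  -- every d-vertex of S₀ is adjacent (in Gk) to x
  have hdadj : ∀ i : Fin k, (i : ℕ) < k - 1 → (Gk k).Adj (Sum.inl i) x := by
    intro i hi
    have hdi : (Sum.inl i : Vk k) ∈ H.verts :=
      hsub (by exact_mod_cast mem_S0.mpr (Or.inr ⟨i, hi, rfl⟩))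
    obtain ⟨w', hadj', -⟩ := exists_closer H hc hdi hr (by simp [rVert])
    have hab' : isAB w'.1 := adj_to_ab (H.adj_sub hadj') (by simp [isAB])
    have hw'S0 : w'.1 ∉ (↑(S0 k) : Set (Vk k)) := by
      intro hmem
      rcases mem_S0.mp (by exact_mod_cast hmem) with h | ⟨i', hi', h⟩ <;>
        rw [h] at hab' <;> simp [isAB, rVert] at hab'
    have : w'.1 = x := huniq w'.1 ⟨w'.2, hw'S0⟩
    rw [← this]
    exact H.adj_sub hadj'
  -- contradiction by case analysis on x
  rcases hx2 : x with i | a | b | u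
  · rw [hx2] at hxab; simp [isAB] at hxab
  · have := hdadj ⟨mval k, by omega⟩ (by simp; omega)
    rw [hx2] at this
    have := (adj_da_iff.mp this).1
    simp at this
  · have := hdadj ⟨0, by omega⟩ (by simp; omega)
    rw [hx2] at this
    have := (adj_db_iff.mp this).1
    simp at this
    omega
  · rw [hx2] at hxab; simp [isAB] at hxab

lemma steinerDist_le_s9 {k : ℕ} (hk : 5 ≤ k) (S : Finset (Vk k)) (hrS : rVert k ∈ S)
    (hScard : S.card = k) : steinerDist (Gk k) ↑S ≤ k + 1 := by
  obtain ⟨H, hconn, hsub, hle⟩ := exists_small hk S hrS hScard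
  exact le_trans (Nat.sInf_le ⟨H, hconn, hsub, rfl⟩) hle

lemma steinerDist_S0 {k : ℕ} (hk : 5 ≤ k) : steinerDist (Gk k) ↑(S0 k) = k + 1 := by
  refine le_antisymm (steinerDist_le_s9 hk _ (r_mem_S0 k) (card_S0 hk)) ?_
  apply le_csInf
  · obtain ⟨H, hconn, hsub, -⟩ := exists_small hk (S0 k) (r_mem_S0 k) (card_S0 hk)
    exact ⟨H.edgeSet.ncard, H, hconn, hsub, rfl⟩
  · rintro n ⟨H, hconn, hsub, rfl⟩
    exact lower_bound hk H hconn hsub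

end SteinerAux

theorem steinerEcc_r {k : ℕ} (hk : 5 ≤ k) : steinerEcc (Gk k) k (rVert k) = k + 1 := by
  apply IsGreatest.csSup_eq
  constructor
  · exact ⟨SteinerAux.S0 k, SteinerAux.r_mem_S0 k, SteinerAux.card_S0 hk,
      SteinerAux.steinerDist_S0 hk⟩
  · rintro n ⟨S, hrS, hScard, rfl⟩
    exact SteinerAux.steinerDist_le_s9 hk S hrS hScard
end
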